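/- arXiv:1201.3340 — 8 statements merged into one kernel-verified Lean document; each statement's English description precedes it below -/
import Mathlib

section
/- Let n ≥ 3 and let X_1, …, X_n be jointly distributed random variables taking values in finite sets (i.e. there is a single joint probability distribution of (X_1,…,X_n)). Then for every i ∈ {1,…,n} (indices taken modulo n, so X_{n+1} = X_1), the joint Shannon entropies satisfy the chained n-cycle inequality H(X_i X_{i+1}) + ∑_{j ∉ {i, i+1}} H(X_j) ≤ ∑_{j ≠ i} H(X_j X_{j+1}). -/
/-- Shannon entropy (in bits) of a finitely supported weight function,
with the convention `0 * logb 2 0 = 0` (automatic since `Real.logb 2 0 = 0`). -/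
noncomputable def shannonEntropy {β : Type*} [Fintype β] (q : β → ℝ) : ℝ :=
  -∑ b, q b * Real.logb 2 (q b)

/-- Joint Shannon entropy of a random variable `X` on a finite probability space
with weights `p`. -/
noncomputable def jointEntropy {Ω β : Type*} [Fintype Ω] [Fintype β] [DecidableEq β]
    (p : Ω → ℝ) (X : Ω → β) : ℝ :=
  shannonEntropy (fun b => ∑ ω ∈ Finset.univ.filter (fun ω => X ω = b), p ω)

/-!
Write `H(X) = -∑ ω, p ω * log P(X = X ω) / log 2`. Strong subadditivity
`H(A,B,C) + H(B) ≤ H(A,B) + H(B,C)` is then `log x ≤ x - 1` averaged against `p`, for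
`x = P(A,B) P(B,C) / (P(B) P(A,B,C))`: grouping `ω` by the value of `(A,B,C)` and summing out `a`
and `c` bounds the `p`-average of `x` by `∑_b P(B = b)`, the total mass. Since
`H(A,C) ≤ H(A,B,C)` this gives `H(A,C) + H(B) ≤ H(A,B) + H(B,C)`, and chaining it along the path
`X_{i+1}, X_{i+2}, …, X_{i+n} = X_i` yields the cycle inequality.
-/

open Finset Real

section Law

variable {Ω α β : Type*} [Fintype Ω] [DecidableEq α] [DecidableEq β] {p : Ω → ℝ}

noncomputable def law (p : Ω → ℝ) (X : Ω → α) (a : α) : ℝ :=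
  ∑ ω ∈ univ.filter (fun ω => X ω = a), p ω

lemma law_nonneg (hp : ∀ ω, 0 ≤ p ω) (X : Ω → α) (a : α) : 0 ≤ law p X a :=
  sum_nonneg fun ω _ => hp ω

lemma le_law_apply (hp : ∀ ω, 0 ≤ p ω) (X : Ω → α) (ω : Ω) : p ω ≤ law p X (X ω) :=
  single_le_sum (fun ω' _ => hp ω') (by simp)

lemma law_le_law_comp (hp : ∀ ω, 0 ≤ p ω) (X : Ω → α) (f : α → β) (a : α) :
    law p X a ≤ law p (fun ω => f (X ω)) (f a) :=
  sum_le_sum_of_subset_of_nonneg (fun ω => by simp_all) fun ω _ _ => hp ω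

lemma sum_law_mul [Fintype α] (p : Ω → ℝ) (X : Ω → α) (F : α → ℝ) :
    ∑ a, law p X a * F a = ∑ ω, p ω * F (X ω) := by
  simp only [law, sum_mul]
  rw [← sum_fiberwise univ X (fun ω => p ω * F (X ω))]
  exact sum_congr rfl fun a _ => sum_congr rfl fun ω hω => by rw [(mem_filter.1 hω).2]

lemma sum_law [Fintype α] (p : Ω → ℝ) (X : Ω → α) : ∑ a, law p X a = ∑ ω, p ω := by
  simpa using sum_law_mul p X 1

lemma sum_law_prod_left [Fintype α] (p : Ω → ℝ) (A : Ω → α) (B : Ω → β) (b : β) :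
    ∑ a, law p (fun ω => (A ω, B ω)) (a, b) = law p B b := by
  simp only [law, sum_filter, Prod.ext_iff]
  rw [sum_comm]
  simp [ite_and]

lemma sum_law_prod_right [Fintype β] (p : Ω → ℝ) (A : Ω → α) (B : Ω → β) (a : α) :
    ∑ b, law p (fun ω => (A ω, B ω)) (a, b) = law p A a := by
  simp only [law, sum_filter, Prod.ext_iff]
  rw [sum_comm]
  simp [ite_and]

end Law

section Entropy

variable {Ω α β γ : Type*} [Fintype Ω] [Fintype α] [DecidableEq α] [Fintype β] [DecidableEq β]
  [Fintype γ] [DecidableEq γ] {p : Ω → ℝ}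

lemma jointEntropy_eq_neg_sum_mul_log (p : Ω → ℝ) (X : Ω → α) :
    jointEntropy p X = -(∑ ω, p ω * log (law p X (X ω))) / log 2 := by
  rw [← sum_law_mul p X (fun a => log (law p X a)), neg_div, sum_div]
  simp only [jointEntropy, shannonEntropy, logb, mul_div_assoc]
  rfl

lemma jointEntropy_congr (p : Ω → ℝ) {X : Ω → α} {Y : Ω → β}
    (h : ∀ ω ω', X ω' = X ω ↔ Y ω' = Y ω) : jointEntropy p X = jointEntropy p Y := by
  have hlaw : ∀ ω, law p X (X ω) = law p Y (Y ω) := fun ω =>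
    sum_congr (filter_congr fun ω' _ => h ω ω') fun _ _ => rfl
  simp only [jointEntropy_eq_neg_sum_mul_log, hlaw]

lemma jointEntropy_prod_comm (p : Ω → ℝ) (X : Ω → α) (Y : Ω → β) :
    jointEntropy p (fun ω => (X ω, Y ω)) = jointEntropy p (fun ω => (Y ω, X ω)) :=
  jointEntropy_congr p fun _ _ => by simp [and_comm]

lemma jointEntropy_comp_le (hp : ∀ ω, 0 ≤ p ω) (X : Ω → α) (f : α → β) :
    jointEntropy p (fun ω => f (X ω)) ≤ jointEntropy p X := by
  simp only [jointEntropy_eq_neg_sum_mul_log]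
  refine div_le_div_of_nonneg_right (neg_le_neg (sum_le_sum fun ω _ => ?_)) (log_nonneg one_le_two)
  rcases (hp ω).eq_or_lt with h | h
  · simp [← h]
  · exact mul_le_mul_of_nonneg_left
      (log_le_log (h.trans_le (le_law_apply hp X ω)) (law_le_law_comp hp X f (X ω))) (hp ω)

lemma sum_mul_law_ratio_le (hp : ∀ ω, 0 ≤ p ω) (A : Ω → α) (B : Ω → β) (C : Ω → γ) :
    ∑ ω, p ω * (law p (fun ω => (A ω, B ω)) (A ω, B ω) * law p (fun ω => (B ω, C ω)) (B ω, C ω) /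
      (law p B (B ω) * law p (fun ω => (A ω, B ω, C ω)) (A ω, B ω, C ω))) ≤ ∑ ω, p ω := by
  set s := law p (fun ω => (A ω, B ω))
  set u := law p (fun ω => (B ω, C ω))
  set r := law p B
  set q := law p (fun ω => (A ω, B ω, C ω))
  have hq : ∀ t, 0 ≤ q t := law_nonneg hp _
  have hG : ∀ t : α × β × γ, 0 ≤ s (t.1, t.2.1) * u t.2 / r t.2.1 := fun t =>
    div_nonneg (mul_nonneg (law_nonneg hp _ _) (law_nonneg hp _ _)) (law_nonneg hp _ _)
  calc _ = ∑ t : α × β × γ, q t * (s (t.1, t.2.1) * u t.2 / (r t.2.1 * q t)) :=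
        (sum_law_mul p _ fun t => s (t.1, t.2.1) * u t.2 / (r t.2.1 * q t)).symm
    _ ≤ ∑ t : α × β × γ, s (t.1, t.2.1) * u t.2 / r t.2.1 := sum_le_sum fun t _ => by
        rcases (hq t).eq_or_lt with h | h
        · rw [← h, zero_mul]; exact hG t
        · rw [← div_div, mul_div_cancel₀ _ h.ne']
    _ = ∑ b, (∑ a, s (a, b)) * (∑ c, u (b, c)) / r b := by
        simp only [Fintype.sum_prod_type, sum_mul_sum, sum_div]
        exact sum_comm
    _ = ∑ ω, p ω := by
        simp only [s, u, r, sum_law_prod_left, sum_law_prod_right, mul_self_div_self, sum_law]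

theorem jointEntropy_triple_add_le (hp : ∀ ω, 0 ≤ p ω) (A : Ω → α) (B : Ω → β) (C : Ω → γ) :
    jointEntropy p (fun ω => (A ω, B ω, C ω)) + jointEntropy p B ≤
      jointEntropy p (fun ω => (A ω, B ω)) + jointEntropy p (fun ω => (B ω, C ω)) := by
  set s := law p (fun ω => (A ω, B ω))
  set u := law p (fun ω => (B ω, C ω))
  set r := law p B
  set q := law p (fun ω => (A ω, B ω, C ω))
  have hpt : ∀ ω, p ω * (log (s (A ω, B ω)) + log (u (B ω, C ω)) - log (r (B ω)) -
      log (q (A ω, B ω, C ω))) ≤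
      p ω * (s (A ω, B ω) * u (B ω, C ω) / (r (B ω) * q (A ω, B ω, C ω))) - p ω := fun ω => by
    rcases (hp ω).eq_or_lt with h | h
    · simp [← h]
    have hs := h.trans_le (le_law_apply hp (fun ω => (A ω, B ω)) ω)
    have hu := h.trans_le (le_law_apply hp (fun ω => (B ω, C ω)) ω)
    have hr := h.trans_le (le_law_apply hp B ω)
    have hq := h.trans_le (le_law_apply hp (fun ω => (A ω, B ω, C ω)) ω)
    rw [← log_mul hs.ne' hu.ne', ← log_div (by positivity) hr.ne', ← log_div (by positivity) hq.ne',
      div_div, ← mul_sub_one]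
    exact mul_le_mul_of_nonneg_left (log_le_sub_one_of_pos (by positivity)) h.le
  have hsum := (sum_le_sum fun ω (_ : ω ∈ univ) => hpt ω).trans_eq (sum_sub_distrib _ _)
  simp only [mul_add, mul_sub, sum_add_distrib, sum_sub_distrib] at hsum
  have hratio := sum_mul_law_ratio_le hp A B C
  simp only [jointEntropy_eq_neg_sum_mul_log, ← add_div]
  exact div_le_div_of_nonneg_right (by linarith) (log_nonneg one_le_two)

theorem jointEntropy_pair_add_le (hp : ∀ ω, 0 ≤ p ω) (A : Ω → α) (B : Ω → β) (C : Ω → γ) :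
    jointEntropy p (fun ω => (A ω, C ω)) + jointEntropy p B ≤
      jointEntropy p (fun ω => (A ω, B ω)) + jointEntropy p (fun ω => (B ω, C ω)) := by
  have : jointEntropy p (fun ω => (A ω, C ω)) ≤ jointEntropy p (fun ω => (A ω, B ω, C ω)) :=
    jointEntropy_comp_le hp (fun ω => (A ω, B ω, C ω)) fun t => (t.1, t.2.2)
  linarith [jointEntropy_triple_add_le hp A B C]

end Entropy

section Path

variable {Ω ι : Type*} [Fintype Ω] {α : ι → Type*} [∀ j, Fintype (α j)] [∀ j, DecidableEq (α j)]
  {p : Ω → ℝ}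

theorem jointEntropy_path_le (hp : ∀ ω, 0 ≤ p ω) (X : ∀ j, Ω → α j) (f : ι → ι) (σ : ℕ → ι)
    (hσ : ∀ m, σ (m + 1) = f (σ m)) {k : ℕ} (hk : 2 ≤ k) :
    jointEntropy p (fun ω => (X (σ 1) ω, X (σ k) ω)) + ∑ m ∈ Ico 2 k, jointEntropy p (X (σ m)) ≤
      ∑ m ∈ Ico 1 k, jointEntropy p (fun ω => (X (σ m) ω, X (f (σ m)) ω)) := by
  induction k, hk using Nat.le_induction with
  | base =>
    rw [show (2 : ℕ) = 1 + 1 from rfl, hσ 1]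
    simp
  | succ k hk ih =>
    rw [sum_Ico_succ_top (by omega), sum_Ico_succ_top (by omega)]
    have step := jointEntropy_pair_add_le hp (X (σ 1)) (X (σ k)) (X (σ (k + 1)))
    rw [hσ k] at step ⊢
    linarith

end Path

open scoped Fin.NatCast

lemma Fin.sum_Ico_add_natCast {M : Type*} [AddCommMonoid M] {n : ℕ} [NeZero n] (i : Fin n)
    (k : ℕ) (g : Fin n → M) :
    ∑ m ∈ Ico k n, g (i + m) = ∑ j ∈ univ.filter (fun j => k ≤ ((j - i : Fin n) : ℕ)), g j := by
  refine sum_nbij' (fun m => i + m) (fun j => ((j - i : Fin n) : ℕ)) ?_ ?_ ?_ ?_ fun _ _ => rfl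
  · intro m hm
    rw [mem_Ico] at hm
    simp [Fin.val_cast_of_lt hm.2, hm.1]
  · intro j _
    simp_all [(j - i).isLt]
  · intro m hm
    simp [Fin.val_cast_of_lt (mem_Ico.1 hm).2]
  · intro j _
    simp

lemma Fin.one_le_val_sub_iff {n : ℕ} [NeZero n] (i j : Fin n) :
    1 ≤ ((j - i : Fin n) : ℕ) ↔ j ≠ i := by
  rw [Nat.one_le_iff_ne_zero, Ne, Fin.val_eq_zero_iff, sub_eq_zero]

lemma Fin.two_le_val_sub_iff {n : ℕ} [NeZero n] (hn : 2 ≤ n) (i j : Fin n) :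
    2 ≤ ((j - i : Fin n) : ℕ) ↔ j ≠ i ∧ j ≠ i + 1 := by
  have h1 : ((1 : Fin n) : ℕ) = 1 := by rw [Fin.val_one', Nat.mod_eq_of_lt hn]
  rw [← Fin.one_le_val_sub_iff, Ne, ← sub_eq_iff_eq_add', Fin.ext_iff, h1]
  omega

theorem cycle_entropic_inequality_general {n : ℕ} [NeZero n] (hn : 3 ≤ n) {Ω : Type*} [Fintype Ω]
    {α : Fin n → Type*} [∀ j, Fintype (α j)] [∀ j, DecidableEq (α j)]
    (p : Ω → ℝ) (hp0 : ∀ ω, 0 ≤ p ω)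
    (X : ∀ j, Ω → α j) (i : Fin n) :
    jointEntropy p (fun ω => (X i ω, X (i + 1) ω)) +
      ∑ j ∈ Finset.univ.filter (fun j => j ≠ i ∧ j ≠ i + 1), jointEntropy p (X j) ≤
    ∑ j ∈ Finset.univ.filter (fun j => j ≠ i),
      jointEntropy p (fun ω => (X j ω, X (j + 1) ω)) := by
  have hpath := jointEntropy_path_le hp0 X (· + 1) (fun m : ℕ => i + m)
    (fun m => by push_cast; rw [add_assoc]) (k := n) (by omega)
  rw [Fin.sum_Ico_add_natCast i 2 fun j => jointEntropy p (X j),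
    Fin.sum_Ico_add_natCast i 1 fun j => jointEntropy p (fun ω => (X j ω, X (j + 1) ω)),
    Nat.cast_one, Fin.natCast_self, add_zero, jointEntropy_prod_comm] at hpath
  simpa only [Fin.one_le_val_sub_iff, Fin.two_le_val_sub_iff (by omega : 2 ≤ n)] using hpath

/-- The chained `n`-cycle entropic inequality of Braunstein–Caves: for jointly
distributed finite random variables `X_0, …, X_{n-1}` (indices mod `n`) and any `i`,
`H(X_i X_{i+1}) + ∑_{j ∉ {i,i+1}} H(X_j) ≤ ∑_{j ≠ i} H(X_j X_{j+1})`. -/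
theorem cycle_entropic_inequality {n : ℕ} [NeZero n] (hn : 3 ≤ n) {Ω : Type*} [Fintype Ω]
    {α : Fin n → Type*} [∀ j, Fintype (α j)] [∀ j, DecidableEq (α j)]
    (p : Ω → ℝ) (hp0 : ∀ ω, 0 ≤ p ω) (hp1 : ∑ ω, p ω = 1)
    (X : ∀ j, Ω → α j) (i : Fin n) :
    jointEntropy p (fun ω => (X i ω, X (i + 1) ω)) +
      ∑ j ∈ Finset.univ.filter (fun j => j ≠ i ∧ j ≠ i + 1), jointEntropy p (X j) ≤
    ∑ j ∈ Finset.univ.filter (fun j => j ≠ i),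
      jointEntropy p (fun ω => (X j ω, X (j + 1) ω)) :=
  cycle_entropic_inequality_general hn p hp0 X i
end

section
/- For the Popescu–Rohrlich box P^PR(a,b|x,y) = (1/4)[1 + (−1)^{a⊕b⊕xy}] and the classically correlated box P^c(a,b|x,y) = (1/4)[1 + (−1)^{a⊕b}] (with a,b,x,y ∈ {0,1}): for every x,y the Shannon entropy of the distribution P^PR(·,·|x,y) equals that of P^c(·,·|x,y) (both equal 1 bit), and all single-observable marginal entropies of the two boxes also coincide (all equal 1 bit). Consequently CHSH_E(P^PR) = CHSH_E(P^c) = 0, so the PR box does not violate the entropic CHSH inequality. -/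
/-- Joint Shannon entropy of a bipartite outcome distribution. -/
noncomputable def pairEntropy {β γ : Type*} [Fintype β] [Fintype γ] (q : β → γ → ℝ) : ℝ :=
  -∑ b, ∑ c, q b c * Real.logb 2 (q b c)

/-- First-component marginal of a bipartite outcome distribution. -/
noncomputable def margFst {β γ : Type*} [Fintype γ] (q : β → γ → ℝ) : β → ℝ :=
  fun b => ∑ c, q b c

/-- Second-component marginal of a bipartite outcome distribution. -/
noncomputable def margSnd {β γ : Type*} [Fintype β] (q : β → γ → ℝ) : γ → ℝ :=
  fun c => ∑ b, q b c

/-- The entropic CHSH expression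
`CHSH_E = H(A₁B₁) + H(A₀) + H(B₀) − H(A₀B₀) − H(A₀B₁) − H(A₁B₀)`
of a CHSH box `P x y a b = P(a,b|x,y)`. -/
noncomputable def CHSHE {β γ : Type*} [Fintype β] [Fintype γ]
    (P : Fin 2 → Fin 2 → β → γ → ℝ) : ℝ :=
  pairEntropy (P 1 1) + shannonEntropy (margFst (P 0 0)) + shannonEntropy (margSnd (P 0 0))
    - pairEntropy (P 0 0) - pairEntropy (P 0 1) - pairEntropy (P 1 0)

/-- The Popescu–Rohrlich box `P^PR(a,b|x,y) = (1/4)[1 + (−1)^(a⊕b⊕xy)]`. -/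
noncomputable def PPR : Fin 2 → Fin 2 → Fin 2 → Fin 2 → ℝ :=
  fun x y a b => (1 / 4) * (1 + (-1 : ℝ) ^ (a.val + b.val + x.val * y.val))

/-- The classically correlated box `P^c(a,b|x,y) = (1/4)[1 + (−1)^(a⊕b)]`. -/
noncomputable def Pc : Fin 2 → Fin 2 → Fin 2 → Fin 2 → ℝ :=
  fun _ _ a b => (1 / 4) * (1 + (-1 : ℝ) ^ (a.val + b.val))

lemma logb_half : Real.logb 2 (1 / 2 : ℝ) = -1 := by
  rw [show (1/2:ℝ) = 2⁻¹ by norm_num, Real.logb_inv, Real.logb_self_eq_one] <;> norm_num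

lemma pe_aux (x y : Fin 2) : pairEntropy (PPR x y) = 1 ∧ pairEntropy (Pc x y) = 1 ∧
    shannonEntropy (margFst (PPR x y)) = 1 ∧ shannonEntropy (margFst (Pc x y)) = 1 ∧
    shannonEntropy (margSnd (PPR x y)) = 1 ∧ shannonEntropy (margSnd (Pc x y)) = 1 := by
  fin_cases x <;> fin_cases y <;>
    norm_num [pairEntropy, shannonEntropy, margFst, margSnd, PPR, Pc, Fin.sum_univ_two,
      logb_half, Real.logb_zero]

/-- The PR box is entropically indistinguishable from classical correlations: all joint
entropies `H(A_xB_y)` and all marginal entropies of `P^PR` and `P^c` coincide (and equal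
1 bit), hence `CHSH_E(P^PR) = CHSH_E(P^c) = 0` and the PR box does not violate the
entropic CHSH inequality `CHSH_E ≤ 0`. -/
theorem PR_box_entropically_classical :
    (∀ x y : Fin 2, pairEntropy (PPR x y) = 1 ∧ pairEntropy (Pc x y) = 1) ∧
    (∀ x y : Fin 2,
      shannonEntropy (margFst (PPR x y)) = 1 ∧ shannonEntropy (margFst (Pc x y)) = 1 ∧
      shannonEntropy (margSnd (PPR x y)) = 1 ∧ shannonEntropy (margSnd (Pc x y)) = 1) ∧
    CHSHE PPR = 0 ∧ CHSHE Pc = 0 ∧ CHSHE PPR ≤ 0 := by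
  refine ⟨fun x y => ⟨(pe_aux x y).1, (pe_aux x y).2.1⟩,
    fun x y => ⟨(pe_aux x y).2.2.1, (pe_aux x y).2.2.2.1, (pe_aux x y).2.2.2.2.1,
      (pe_aux x y).2.2.2.2.2⟩, ?_, ?_, ?_⟩ <;>
  simp only [CHSHE, (pe_aux 0 0).1, (pe_aux 0 1).1, (pe_aux 1 0).1, (pe_aux 1 1).1,
    (pe_aux 0 0).2.1, (pe_aux 0 1).2.1, (pe_aux 1 0).2.1, (pe_aux 1 1).2.1,
    (pe_aux 0 0).2.2.1, (pe_aux 0 0).2.2.2.1, (pe_aux 0 0).2.2.2.2.1,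
    (pe_aux 0 0).2.2.2.2.2] <;> norm_num
end

section
/- Let P be any CHSH marginal model in which every observable has exactly two outcomes (all four distributions P(·,·|x,y) are distributions on {0,1} × {0,1} with consistent marginals). Then CHSH_E(P) ≤ 1. -/
noncomputable def entN {β : Type*} [Fintype β] (q : β → ℝ) : ℝ :=
  -∑ b, q b * Real.log (q b)

noncomputable def entN2 {β γ : Type*} [Fintype β] [Fintype γ] (q : β → γ → ℝ) : ℝ :=
  -∑ b, ∑ c, q b c * Real.log (q b c)

lemma shannonEntropy_eq {β : Type*} [Fintype β] (q : β → ℝ) :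
    shannonEntropy q = entN q / Real.log 2 := by
  simp only [shannonEntropy, entN, Real.logb, neg_div, Finset.sum_div, mul_div_assoc]

lemma pairEntropy_eq {β γ : Type*} [Fintype β] [Fintype γ] (q : β → γ → ℝ) :
    pairEntropy q = entN2 q / Real.log 2 := by
  simp only [pairEntropy, entN2, Real.logb, neg_div, Finset.sum_div, mul_div_assoc]

lemma gibbs {ι : Type*} [Fintype ι] (p r : ι → ℝ) (hp : ∀ i, 0 ≤ p i)
    (hr : ∀ i, 0 ≤ r i) (hpr : ∀ i, 0 < p i → 0 < r i)
    (hps : ∑ i, p i = 1) (hrs : ∑ i, r i ≤ 1) :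
    ∑ i, p i * Real.log (r i) ≤ ∑ i, p i * Real.log (p i) := by
  have key : ∀ i, p i * Real.log (r i) - p i * Real.log (p i) ≤ r i - p i := by
    intro i
    rcases eq_or_lt_of_le (hp i) with h | h
    · simp [← h, hr i]
    · have hri := hpr i h
      have h1 := Real.log_le_sub_one_of_pos (div_pos hri h)
      rw [Real.log_div (ne_of_gt hri) (ne_of_gt h)] at h1
      have h2 : p i * (Real.log (r i) - Real.log (p i)) ≤ p i * (r i / p i - 1) :=
        mul_le_mul_of_nonneg_left h1 h.le
      have h3 : p i * (r i / p i - 1) = r i - p i := by field_simp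
      rw [mul_sub] at h2
      linarith
  have h1 : ∑ i, (p i * Real.log (r i) - p i * Real.log (p i)) ≤ ∑ i, (r i - p i) :=
    Finset.sum_le_sum fun i _ => key i
  rw [Finset.sum_sub_distrib, Finset.sum_sub_distrib, hps] at h1
  linarith

lemma entN2_le_marg {β γ : Type*} [Fintype β] [Fintype γ] (q : β → γ → ℝ)
    (hq : ∀ b c, 0 ≤ q b c) (hs : ∑ b, ∑ c, q b c = 1) :
    entN2 q ≤ entN (margFst q) + entN (margSnd q) := by
  have hFnn : ∀ b, 0 ≤ margFst q b := fun b => Finset.sum_nonneg fun c _ => hq b c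
  have hSnn : ∀ c, 0 ≤ margSnd q c := fun c => Finset.sum_nonneg fun b _ => hq b c
  have hle1 : ∀ b c, q b c ≤ margFst q b := fun b c =>
    Finset.single_le_sum (fun c _ => hq b c) (Finset.mem_univ c)
  have hle2 : ∀ b c, q b c ≤ margSnd q c := fun b c =>
    Finset.single_le_sum (fun b _ => hq b c) (Finset.mem_univ b)
  have hFs : ∑ b, margFst q b = 1 := by simpa [margFst] using hs
  have hSs : ∑ c, margSnd q c = 1 := by
    rw [show (∑ c, margSnd q c) = ∑ b, ∑ c, q b c from Finset.sum_comm]; exact hs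
  have hg := gibbs (ι := β × γ) (fun i => q i.1 i.2)
    (fun i => margFst q i.1 * margSnd q i.2)
    (fun i => hq i.1 i.2) (fun i => mul_nonneg (hFnn i.1) (hSnn i.2))
    (fun i hi => mul_pos (lt_of_lt_of_le hi (hle1 i.1 i.2)) (lt_of_lt_of_le hi (hle2 i.1 i.2)))
    (by rw [Fintype.sum_prod_type]; exact hs)
    (by rw [Fintype.sum_prod_type]
        simp only [← Finset.mul_sum, hSs, mul_one, hFs, le_refl])
  have hsplit : ∀ b c, q b c * Real.log (margFst q b * margSnd q c)
      = q b c * Real.log (margFst q b) + q b c * Real.log (margSnd q c) := by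
    intro b c
    rcases eq_or_lt_of_le (hq b c) with h | h
    · simp [← h]
    · rw [Real.log_mul (ne_of_gt (lt_of_lt_of_le h (hle1 b c)))
        (ne_of_gt (lt_of_lt_of_le h (hle2 b c))), mul_add]
  have hL : (∑ i : β × γ, q i.1 i.2 * Real.log (margFst q i.1 * margSnd q i.2))
      = (∑ b, margFst q b * Real.log (margFst q b))
        + ∑ c, margSnd q c * Real.log (margSnd q c) := by
    rw [Fintype.sum_prod_type]
    have : ∀ b, ∑ c, q b c * Real.log (margFst q b * margSnd q c)
        = (∑ c, q b c * Real.log (margFst q b)) + ∑ c, q b c * Real.log (margSnd q c) := by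
      intro b
      rw [← Finset.sum_add_distrib]
      exact Finset.sum_congr rfl fun c _ => hsplit b c
    rw [Finset.sum_congr rfl fun b _ => this b, Finset.sum_add_distrib]
    congr 1
    · exact Finset.sum_congr rfl fun b _ => by rw [← Finset.sum_mul]; rfl
    · rw [Finset.sum_comm]
      exact Finset.sum_congr rfl fun c _ => by rw [← Finset.sum_mul]; rfl
  have hR : (∑ i : β × γ, q i.1 i.2 * Real.log (q i.1 i.2))
      = ∑ b, ∑ c, q b c * Real.log (q b c) := Fintype.sum_prod_type _
  rw [hL, hR] at hg
  unfold entN2 entN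
  linarith

lemma entN_margFst_le {β γ : Type*} [Fintype β] [Fintype γ] (q : β → γ → ℝ)
    (hq : ∀ b c, 0 ≤ q b c) : entN (margFst q) ≤ entN2 q := by
  unfold entN entN2 margFst
  have key : ∀ b, ∑ c, q b c * Real.log (q b c) ≤ (∑ c, q b c) * Real.log (∑ c, q b c) := by
    intro b
    calc ∑ c, q b c * Real.log (q b c)
        ≤ ∑ c, q b c * Real.log (∑ c', q b c') := by
          refine Finset.sum_le_sum fun c _ => ?_
          rcases eq_or_lt_of_le (hq b c) with h | h
          · simp [← h]
          · exact mul_le_mul_of_nonneg_left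
              (Real.log_le_log h (Finset.single_le_sum (fun c' _ => hq b c') (Finset.mem_univ c)))
              (hq b c)
      _ = (∑ c, q b c) * Real.log (∑ c', q b c') := (Finset.sum_mul _ _ _).symm
  exact neg_le_neg (Finset.sum_le_sum fun b _ => key b)

lemma entN_margSnd_le {β γ : Type*} [Fintype β] [Fintype γ] (q : β → γ → ℝ)
    (hq : ∀ b c, 0 ≤ q b c) : entN (margSnd q) ≤ entN2 q := by
  unfold entN entN2 margSnd
  rw [show (∑ b, ∑ c, q b c * Real.log (q b c)) = ∑ c, ∑ b, q b c * Real.log (q b c) from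
    Finset.sum_comm]
  have key : ∀ c, ∑ b, q b c * Real.log (q b c) ≤ (∑ b, q b c) * Real.log (∑ b, q b c) := by
    intro c
    calc ∑ b, q b c * Real.log (q b c)
        ≤ ∑ b, q b c * Real.log (∑ b', q b' c) := by
          refine Finset.sum_le_sum fun b _ => ?_
          rcases eq_or_lt_of_le (hq b c) with h | h
          · simp [← h]
          · exact mul_le_mul_of_nonneg_left
              (Real.log_le_log h (Finset.single_le_sum (fun b' _ => hq b' c) (Finset.mem_univ b)))
              (hq b c)
      _ = (∑ b, q b c) * Real.log (∑ b', q b' c) := (Finset.sum_mul _ _ _).symm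
  exact neg_le_neg (Finset.sum_le_sum fun c _ => key c)

lemma entN_fin2_le (q : Fin 2 → ℝ) (hq : ∀ b, 0 ≤ q b) (hs : ∑ b, q b = 1) :
    entN q ≤ Real.log 2 := by
  have hg := gibbs q (fun _ => (2:ℝ)⁻¹) hq (fun _ => by norm_num) (fun _ _ => by norm_num) hs
    (by norm_num)
  have hL : ∑ i, q i * Real.log (2:ℝ)⁻¹ = -Real.log 2 := by
    rw [← Finset.sum_mul, hs, one_mul, Real.log_inv]
  rw [hL] at hg
  unfold entN
  linarith

/-- For every CHSH marginal model with two-outcome observables (four probability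
distributions on `{0,1} × {0,1}` with consistent marginals), `CHSH_E ≤ 1`. -/
theorem two_outcome_CHSHE_le_one (P : Fin 2 → Fin 2 → Fin 2 → Fin 2 → ℝ)
    (hnn : ∀ x y a b, 0 ≤ P x y a b)
    (hsum : ∀ x y, ∑ a, ∑ b, P x y a b = 1)
    (hconsA : ∀ x a, margFst (P x 0) a = margFst (P x 1) a)
    (hconsB : ∀ y b, margSnd (P 0 y) b = margSnd (P 1 y) b) :
    CHSHE P ≤ 1 := by
  have e1 : margFst (P 1 1) = margFst (P 1 0) := funext fun a => (hconsA 1 a).symm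
  have e2 : margSnd (P 1 1) = margSnd (P 0 1) := funext fun b => (hconsB 1 b).symm
  have h11 : entN2 (P 1 1) ≤ entN (margFst (P 1 0)) + entN (margSnd (P 0 1)) := by
    have := entN2_le_marg (P 1 1) (hnn 1 1) (hsum 1 1)
    rwa [e1, e2] at this
  have h10 : entN (margFst (P 1 0)) ≤ entN2 (P 1 0) := entN_margFst_le _ (hnn 1 0)
  have h01 : entN (margSnd (P 0 1)) ≤ entN2 (P 0 1) := entN_margSnd_le _ (hnn 0 1)
  have h00 : entN (margFst (P 0 0)) ≤ entN2 (P 0 0) := entN_margFst_le _ (hnn 0 0)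
  have hB0 : entN (margSnd (P 0 0)) ≤ Real.log 2 := by
    refine entN_fin2_le _ (fun b => Finset.sum_nonneg fun a _ => hnn 0 0 a b) ?_
    rw [show (∑ b, margSnd (P 0 0) b) = ∑ a, ∑ b, P 0 0 a b from Finset.sum_comm]
    exact hsum 0 0
  have hnum : entN2 (P 1 1) + entN (margFst (P 0 0)) + entN (margSnd (P 0 0))
      - entN2 (P 0 0) - entN2 (P 0 1) - entN2 (P 1 0) ≤ Real.log 2 := by linarith
  have hrepr : CHSHE P = (entN2 (P 1 1) + entN (margFst (P 0 0)) + entN (margSnd (P 0 0))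
      - entN2 (P 0 0) - entN2 (P 0 1) - entN2 (P 1 0)) / Real.log 2 := by
    unfold CHSHE
    rw [pairEntropy_eq, pairEntropy_eq, pairEntropy_eq, pairEntropy_eq,
      shannonEntropy_eq, shannonEntropy_eq]
    ring
  rw [hrepr, div_le_one (Real.log_pos one_lt_two)]
  exact hnum
end

section
/- The no-signaling box P^max = (1/2)P^PR + (1/2)P^c, i.e. P^max(a,b|x,y) = (1/8)[2 + (−1)^{a⊕b⊕xy} + (−1)^{a⊕b}] for a,b,x,y ∈ {0,1}, is a CHSH marginal model in which the pairs (A_0,B_0), (A_0,B_1), (A_1,B_0) are perfectly correlated with uniform marginals and the pair (A_1,B_1) is uniformly distributed on {0,1}²; it satisfies CHSH_E(P^max) = 1, the maximal possible value for two-outcome CHSH marginal models, and its CHSH value ⟨A_0B_0⟩+⟨A_0B_1⟩+⟨A_1B_0⟩−⟨A_1B_1⟩ equals 3, which exceeds Tsirelson's bound 2√2. -/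
/-- The box `P^max = (1/2)P^PR + (1/2)P^c`,
i.e. `P^max(a,b|x,y) = (1/8)[2 + (−1)^(a⊕b⊕xy) + (−1)^(a⊕b)]`. -/
noncomputable def Pmax : Fin 2 → Fin 2 → Fin 2 → Fin 2 → ℝ :=
  fun x y a b =>
    (1 / 8) * (2 + (-1 : ℝ) ^ (a.val + b.val + x.val * y.val) + (-1 : ℝ) ^ (a.val + b.val))

/-- The correlator `⟨A_xB_y⟩ = ∑_{a,b} (−1)^(a⊕b) P(a,b|x,y)`. -/
noncomputable def corr (P : Fin 2 → Fin 2 → Fin 2 → Fin 2 → ℝ) (x y : Fin 2) : ℝ :=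
  ∑ a, ∑ b, (-1 : ℝ) ^ (a.val + b.val) * P x y a b

open Finset Real

section Entropy

variable {ι β γ : Type*} [Fintype ι] [Fintype β] [Fintype γ]

/-- `log t ≤ t - 1` at `t = q / p`. -/
lemma mul_logb_sub_mul_logb_le {p q : ℝ} (hp : 0 ≤ p) (hq : 0 ≤ q) (hpq : 0 < p → 0 < q) :
    p * logb 2 q - p * logb 2 p ≤ (q - p) / log 2 := by
  have hlog2 : 0 < log 2 := log_pos one_lt_two
  rcases hp.eq_or_lt with rfl | hp
  · simpa using div_nonneg hq hlog2.le
  have hq := hpq hp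
  have key : log (q / p) ≤ q / p - 1 := log_le_sub_one_of_pos (div_pos hq hp)
  rw [log_div hq.ne' hp.ne'] at key
  calc p * logb 2 q - p * logb 2 p = p * (log q - log p) / log 2 := by
        simp only [logb]; ring
    _ ≤ p * (q / p - 1) / log 2 := by gcongr
    _ = (q - p) / log 2 := by field_simp

theorem shannonEntropy_le_neg_sum_mul_logb {p q : ι → ℝ} (hp : ∀ i, 0 ≤ p i)
    (hp1 : ∑ i, p i = 1) (hq : ∀ i, 0 ≤ q i) (hq1 : ∑ i, q i ≤ 1)
    (hpq : ∀ i, 0 < p i → 0 < q i) :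
    shannonEntropy p ≤ -∑ i, p i * logb 2 (q i) := by
  have hsum : ∑ i, (p i * logb 2 (q i) - p i * logb 2 (p i)) ≤ ∑ i, (q i - p i) / log 2 :=
    sum_le_sum fun i _ => mul_logb_sub_mul_logb_le (hp i) (hq i) (hpq i)
  rw [sum_sub_distrib, ← sum_div, sum_sub_distrib, hp1] at hsum
  have : (∑ i, q i - 1) / log 2 ≤ 0 :=
    div_nonpos_of_nonpos_of_nonneg (by linarith) (log_pos one_lt_two).le
  rw [shannonEntropy]
  linarith

theorem shannonEntropy_le_logb_card {p : ι → ℝ} (hp : ∀ i, 0 ≤ p i) (hp1 : ∑ i, p i = 1) :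
    shannonEntropy p ≤ logb 2 (Fintype.card ι) := by
  obtain ⟨i₀, -⟩ := nonempty_of_sum_ne_zero (hp1 ▸ one_ne_zero : ∑ i, p i ≠ 0)
  have hcard : (0 : ℝ) < Fintype.card ι := Nat.cast_pos.mpr (Fintype.card_pos_iff.mpr ⟨i₀⟩)
  have h := shannonEntropy_le_neg_sum_mul_logb hp hp1 (fun _ => inv_nonneg.mpr hcard.le)
    (by simp [hcard.ne']) (fun _ _ => inv_pos.mpr hcard)
  rwa [← sum_mul, hp1, one_mul, logb_inv, neg_neg] at h

theorem shannonEntropy_uniform :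
    shannonEntropy (fun _ : ι => (Fintype.card ι : ℝ)⁻¹) = logb 2 (Fintype.card ι) := by
  rcases eq_or_ne (Fintype.card ι) 0 with h | h
  · simp [shannonEntropy, h]
  · simp [shannonEntropy, logb_inv, h]

theorem pairEntropy_eq_shannonEntropy_uncurry (q : β → γ → ℝ) :
    pairEntropy q = shannonEntropy (Function.uncurry q) := by
  simp [pairEntropy, shannonEntropy, Fintype.sum_prod_type]

theorem pairEntropy_flip (q : β → γ → ℝ) : pairEntropy (flip q) = pairEntropy q := by
  simp only [pairEntropy, flip, sum_comm (γ := β)]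

theorem pairEntropy_diag [DecidableEq β] (p : β → ℝ) :
    pairEntropy (fun b c => if b = c then p b else 0) = shannonEntropy p := by
  simp [pairEntropy, shannonEntropy, apply_ite]

end Entropy

section Marginals

variable {β γ : Type*} {q : β → γ → ℝ}

lemma le_margFst [Fintype γ] (hq : ∀ b c, 0 ≤ q b c) (b : β) (c : γ) : q b c ≤ margFst q b :=
  single_le_sum (fun c _ => hq b c) (mem_univ c)

lemma le_margSnd [Fintype β] (hq : ∀ b c, 0 ≤ q b c) (b : β) (c : γ) : q b c ≤ margSnd q c :=
  single_le_sum (fun b _ => hq b c) (mem_univ b)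

lemma sum_margFst [Fintype β] [Fintype γ] (q : β → γ → ℝ) :
    ∑ b, margFst q b = ∑ b, ∑ c, q b c := rfl

lemma sum_margSnd [Fintype β] [Fintype γ] (q : β → γ → ℝ) :
    ∑ c, margSnd q c = ∑ b, ∑ c, q b c := sum_comm

lemma sum_sum_mul_logb_margFst [Fintype β] [Fintype γ] (q : β → γ → ℝ) :
    ∑ b, ∑ c, q b c * logb 2 (margFst q b) = -shannonEntropy (margFst q) := by
  simp only [shannonEntropy, neg_neg, ← sum_mul, margFst]

lemma sum_sum_mul_logb_margSnd [Fintype β] [Fintype γ] (q : β → γ → ℝ) :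
    ∑ b, ∑ c, q b c * logb 2 (margSnd q c) = -shannonEntropy (margSnd q) := by
  rw [sum_comm]
  exact sum_sum_mul_logb_margFst (flip q)

theorem shannonEntropy_margFst_le_pairEntropy [Fintype β] [Fintype γ] (hq : ∀ b c, 0 ≤ q b c) :
    shannonEntropy (margFst q) ≤ pairEntropy q := by
  have key : ∀ b c, q b c * logb 2 (q b c) ≤ q b c * logb 2 (margFst q b) := by
    intro b c
    rcases (hq b c).eq_or_lt with h | h
    · simp [← h]
    · exact mul_le_mul_of_nonneg_left (logb_le_logb_of_le one_lt_two h (le_margFst hq b c)) h.le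
  have := sum_le_sum fun b (_ : b ∈ univ) => sum_le_sum fun c (_ : c ∈ univ) => key b c
  rw [sum_sum_mul_logb_margFst] at this
  rw [pairEntropy]
  linarith

theorem shannonEntropy_margSnd_le_pairEntropy [Fintype β] [Fintype γ] (hq : ∀ b c, 0 ≤ q b c) :
    shannonEntropy (margSnd q) ≤ pairEntropy q :=
  pairEntropy_flip q ▸ shannonEntropy_margFst_le_pairEntropy fun c b => hq b c

/-- Gibbs' inequality against the product of the marginals. -/
theorem pairEntropy_le_add [Fintype β] [Fintype γ] (hq : ∀ b c, 0 ≤ q b c)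
    (hq1 : ∑ b, ∑ c, q b c = 1) :
    pairEntropy q ≤ shannonEntropy (margFst q) + shannonEntropy (margSnd q) := by
  have hF : ∀ b, 0 ≤ margFst q b := fun b => sum_nonneg fun c _ => hq b c
  have hS : ∀ c, 0 ≤ margSnd q c := fun c => sum_nonneg fun b _ => hq b c
  have hlog : ∀ b c, q b c * logb 2 (margFst q b * margSnd q c)
      = q b c * logb 2 (margFst q b) + q b c * logb 2 (margSnd q c) := by
    intro b c
    rcases (hq b c).eq_or_lt with h | h
    · simp [← h]
    · rw [logb_mul (h.trans_le (le_margFst hq b c)).ne' (h.trans_le (le_margSnd hq b c)).ne']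
      ring
  have gibbs := shannonEntropy_le_neg_sum_mul_logb (p := Function.uncurry q)
    (q := fun i : β × γ => margFst q i.1 * margSnd q i.2)
    (fun i => hq i.1 i.2) (by rwa [Fintype.sum_prod_type]) (fun i => mul_nonneg (hF i.1) (hS i.2))
    (by rw [Fintype.sum_prod_type, ← sum_mul_sum, sum_margFst, sum_margSnd, hq1, one_mul])
    (fun i h => mul_pos (h.trans_le (le_margFst hq i.1 i.2)) (h.trans_le (le_margSnd hq i.1 i.2)))
  rw [Fintype.sum_prod_type] at gibbs
  simp only [Function.uncurry_apply_pair, hlog, sum_add_distrib, sum_sum_mul_logb_margFst,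
    sum_sum_mul_logb_margSnd] at gibbs
  rw [pairEntropy_eq_shannonEntropy_uncurry]
  linarith

end Marginals

theorem CHSHE_le_logb_card {β γ : Type*} [Fintype β] [Fintype γ]
    {P : Fin 2 → Fin 2 → β → γ → ℝ} (hP : ∀ x y a b, 0 ≤ P x y a b)
    (hP₀₀ : ∑ a, ∑ b, P 0 0 a b = 1) (hP₁₁ : ∑ a, ∑ b, P 1 1 a b = 1)
    (hA₁ : margFst (P 1 0) = margFst (P 1 1)) (hB₁ : margSnd (P 0 1) = margSnd (P 1 1)) :
    CHSHE P ≤ logb 2 (Fintype.card γ) := by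
  have h₁₁ := pairEntropy_le_add (hP 1 1) hP₁₁
  have h₁₀ := hA₁ ▸ shannonEntropy_margFst_le_pairEntropy (hP 1 0)
  have h₀₁ := hB₁ ▸ shannonEntropy_margSnd_le_pairEntropy (hP 0 1)
  have h₀₀ := shannonEntropy_margFst_le_pairEntropy (hP 0 0)
  have hB₀ : shannonEntropy (margSnd (P 0 0)) ≤ logb 2 (Fintype.card γ) :=
    shannonEntropy_le_logb_card (fun b => sum_nonneg fun a _ => hP 0 0 a b)
      (by rw [sum_margSnd, hP₀₀])
  rw [CHSHE]
  linarith

lemma Pmax_eq_ite {x y : Fin 2} (hxy : ¬(x = 1 ∧ y = 1)) (a b : Fin 2) :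
    Pmax x y a b = if a = b then 1 / 2 else 0 := by
  fin_cases x <;> fin_cases y <;> fin_cases a <;> fin_cases b <;> simp_all [Pmax] <;> norm_num

lemma Pmax_one_one (a b : Fin 2) : Pmax 1 1 a b = 1 / 4 := by
  fin_cases a <;> fin_cases b <;> norm_num [Pmax]

lemma Pmax_nonneg (x y a b : Fin 2) : 0 ≤ Pmax x y a b := by
  fin_cases x <;> fin_cases y <;> fin_cases a <;> fin_cases b <;> norm_num [Pmax]

lemma margFst_Pmax (x y a : Fin 2) : margFst (Pmax x y) a = 1 / 2 := by
  fin_cases x <;> fin_cases y <;> fin_cases a <;> norm_num [Pmax, margFst, Fin.sum_univ_two]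

lemma margSnd_Pmax (x y b : Fin 2) : margSnd (Pmax x y) b = 1 / 2 := by
  fin_cases x <;> fin_cases y <;> fin_cases b <;> norm_num [Pmax, margSnd, Fin.sum_univ_two]

lemma sum_Pmax (x y : Fin 2) : ∑ a, ∑ b, Pmax x y a b = 1 := by
  rw [← sum_margFst]
  norm_num [margFst_Pmax]

lemma shannonEntropy_half : shannonEntropy (fun _ : Fin 2 => (1 / 2 : ℝ)) = 1 := by
  simpa using shannonEntropy_uniform (ι := Fin 2)

lemma pairEntropy_Pmax {x y : Fin 2} (hxy : ¬(x = 1 ∧ y = 1)) : pairEntropy (Pmax x y) = 1 := by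
  rw [funext₂ (Pmax_eq_ite hxy), pairEntropy_diag (fun _ => 1 / 2), shannonEntropy_half]

lemma pairEntropy_Pmax_one_one : pairEntropy (Pmax 1 1) = 2 := by
  have hunif := shannonEntropy_uniform (ι := Fin 2 × Fin 2)
  norm_num at hunif
  rw [pairEntropy_eq_shannonEntropy_uncurry,
    show Function.uncurry (Pmax 1 1) = fun _ => 1 / 4 from funext fun i => Pmax_one_one i.1 i.2,
    hunif, show (4 : ℝ) = 2 ^ 2 by norm_num, logb_pow, logb_self_eq_one one_lt_two]
  norm_num

lemma CHSHE_Pmax : CHSHE Pmax = 1 := by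
  rw [CHSHE, pairEntropy_Pmax_one_one, pairEntropy_Pmax (x := 0) (y := 0) (by decide),
    pairEntropy_Pmax (x := 0) (y := 1) (by decide), pairEntropy_Pmax (x := 1) (y := 0) (by decide),
    funext (margFst_Pmax 0 0), funext (margSnd_Pmax 0 0), shannonEntropy_half]
  norm_num

lemma CHSH_Pmax : corr Pmax 0 0 + corr Pmax 0 1 + corr Pmax 1 0 - corr Pmax 1 1 = 3 := by
  norm_num [corr, Pmax, Fin.sum_univ_two]

lemma two_mul_sqrt_two_lt_three : 2 * √2 < 3 := by
  nlinarith [sq_sqrt (zero_le_two : (0 : ℝ) ≤ 2), sqrt_nonneg 2]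

/-- `P^max` is a CHSH marginal model (nonnegative, normalized, consistent marginals),
the pairs `(A₀,B₀)`, `(A₀,B₁)`, `(A₁,B₀)` are perfectly correlated with uniform
marginals while `(A₁,B₁)` is uniform on `{0,1}²`; it satisfies `CHSH_E(P^max) = 1`,
which is the maximal value over all two-outcome CHSH marginal models, and its CHSH
value is `3`, exceeding Tsirelson's bound `2√2`. -/
theorem Pmax_properties :
    ((∀ x y a b, 0 ≤ Pmax x y a b) ∧ (∀ x y, ∑ a, ∑ b, Pmax x y a b = 1) ∧
      (∀ x a, margFst (Pmax x 0) a = margFst (Pmax x 1) a) ∧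
      (∀ y b, margSnd (Pmax 0 y) b = margSnd (Pmax 1 y) b)) ∧
    (∀ x y : Fin 2, ¬(x = 1 ∧ y = 1) →
      (∀ a b : Fin 2, Pmax x y a b = if a = b then 1 / 2 else 0) ∧
      (∀ a, margFst (Pmax x y) a = 1 / 2) ∧ (∀ b, margSnd (Pmax x y) b = 1 / 2)) ∧
    (∀ a b : Fin 2, Pmax 1 1 a b = 1 / 4) ∧
    CHSHE Pmax = 1 ∧
    (∀ P : Fin 2 → Fin 2 → Fin 2 → Fin 2 → ℝ,
      (∀ x y a b, 0 ≤ P x y a b) → (∀ x y, ∑ a, ∑ b, P x y a b = 1) →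
      (∀ x a, margFst (P x 0) a = margFst (P x 1) a) →
      (∀ y b, margSnd (P 0 y) b = margSnd (P 1 y) b) →
      CHSHE P ≤ CHSHE Pmax) ∧
    corr Pmax 0 0 + corr Pmax 0 1 + corr Pmax 1 0 - corr Pmax 1 1 = 3 ∧
    2 * Real.sqrt 2 < 3 := by
  refine ⟨⟨Pmax_nonneg, sum_Pmax, fun x a => by rw [margFst_Pmax, margFst_Pmax],
      fun y b => by rw [margSnd_Pmax, margSnd_Pmax]⟩,
    fun x y hxy => ⟨Pmax_eq_ite hxy, margFst_Pmax x y, margSnd_Pmax x y⟩,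
    Pmax_one_one, CHSHE_Pmax, fun P hP hsum hA hB => ?_, CHSH_Pmax, two_mul_sqrt_two_lt_three⟩
  have := CHSHE_le_logb_card hP (hsum 0 0) (hsum 1 1) (funext (hA 1)) (funext (hB 1))
  rwa [Fintype.card_fin, Nat.cast_ofNat, logb_self_eq_one one_lt_two, ← CHSHE_Pmax] at this
end

section
/- (Arbitrarily low detection efficiency for the entropic Klyachko inequality in the single-detector model.) Let Q_1, …, Q_5 be probability distributions, where Q_i is the joint distribution of a pair (X_i, X_{i+1}) on a finite outcome set (indices mod 5), with consistent single-observable marginals, and let K_E = H(X_1X_5) + H(X_2) + H(X_3) + H(X_4) − H(X_1X_2) − H(X_2X_3) − H(X_3X_4) − H(X_4X_5) denote the left-hand side of the entropic Klyachko inequality. For η ∈ [0,1], replace each Q_i by Q_i^η, which assigns probability η·Q_i(outcome) to each proper joint outcome and probability 1−η to a single joint no-click outcome (∅,∅) of both observables, with the corresponding marginals for single observables. Then the entropic Klyachko expression of the inefficient model equals η·K_E. In particular, if K_E > 0, then the inefficient model violates the entropic Klyachko inequality for every detection efficiency η ∈ (0,1]. -/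
/-- The left-hand side `K_E` of the entropic Klyachko inequality for a 5-cycle marginal
model `Q`, where `Q i` is the joint distribution of `(X_i, X_{i+1})` (indices mod 5):
`K_E = H(X₄X₀) + H(X₁) + H(X₂) + H(X₃) − H(X₀X₁) − H(X₁X₂) − H(X₂X₃) − H(X₃X₄)`
(in the paper's 1-based notation, `X_j` here is `X_{j+1}` there). -/
noncomputable def klyachkoE {α : Fin 5 → Type*} [∀ i, Fintype (α i)]
    (Q : ∀ i : Fin 5, α i → α (i + 1) → ℝ) : ℝ :=
  pairEntropy (Q 4) + shannonEntropy (margFst (Q 1)) + shannonEntropy (margFst (Q 2)) +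
      shannonEntropy (margFst (Q 3)) -
    pairEntropy (Q 0) - pairEntropy (Q 1) - pairEntropy (Q 2) - pairEntropy (Q 3)

/-- The single-detector inefficient version of a joint distribution: each proper joint
outcome keeps probability `η` times the original one, and a single joint no-click
outcome `(∅,∅)` occurs with probability `1−η`. -/
noncomputable def etaPair {β γ : Type*} (η : ℝ) (q : β → γ → ℝ) :
    Option β → Option γ → ℝ
  | some b, some c => η * q b c
  | none, none => 1 - η
  | _, _ => 0

section Aux

open Real

lemma eta_logb_split (η x : ℝ) :
    η * x * Real.logb 2 (η * x) = η * (x * Real.logb 2 x) + (η * Real.logb 2 η) * x := by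
  rcases eq_or_ne η 0 with hη | hη
  · simp [hη]
  rcases eq_or_ne x 0 with hx | hx
  · simp [hx]
  rw [Real.logb_mul hη hx]; ring

lemma pairEntropy_eta {β γ : Type*} [Fintype β] [Fintype γ] (η : ℝ) (q : β → γ → ℝ)
    (hsum : ∑ b, ∑ c, q b c = 1) :
    pairEntropy (etaPair η q) =
      η * pairEntropy q - η * Real.logb 2 η - (1 - η) * Real.logb 2 (1 - η) := by
  unfold pairEntropy
  rw [Fintype.sum_option]
  simp only [Fintype.sum_option]
  have h1 : etaPair η q none none = 1 - η := rfl
  have h2 : ∀ c : γ, etaPair η q none (some c) = 0 := fun c => rfl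
  have h3 : ∀ b : β, etaPair η q (some b) none = 0 := fun b => rfl
  have h4 : ∀ (b : β) (c : γ), etaPair η q (some b) (some c) = η * q b c := fun b c => rfl
  simp only [h1, h2, h3, h4, zero_mul, Finset.sum_const_zero, add_zero, zero_add]
  have : ∀ b : β, ∑ c, η * q b c * Real.logb 2 (η * q b c) =
      η * (∑ c, q b c * Real.logb 2 (q b c)) + (η * Real.logb 2 η) * (∑ c, q b c) := by
    intro b
    rw [Finset.mul_sum, Finset.mul_sum, ← Finset.sum_add_distrib]
    exact Finset.sum_congr rfl fun c _ => eta_logb_split η (q b c)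
  rw [Finset.sum_congr rfl fun b _ => this b]
  rw [Finset.sum_add_distrib, ← Finset.mul_sum, ← Finset.mul_sum, hsum]
  ring

lemma margFst_eta {β γ : Type*} [Fintype γ] (η : ℝ) (q : β → γ → ℝ) :
    margFst (etaPair η q) = fun b' => Option.rec (1 - η) (fun b => η * margFst q b) b' := by
  funext b'
  cases b' with
  | none =>
    simp only [margFst, Fintype.sum_option]
    have h2 : ∀ c : γ, etaPair η q none (some c) = 0 := fun c => rfl
    simp [h2, etaPair]
  | some b =>
    simp only [margFst, Fintype.sum_option]
    have h3 : etaPair η q (some b) none = 0 := rfl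
    have h4 : ∀ c : γ, etaPair η q (some b) (some c) = η * q b c := fun c => rfl
    simp [h3, h4, Finset.mul_sum]

lemma shannon_marg_eta {β γ : Type*} [Fintype β] [Fintype γ] (η : ℝ) (q : β → γ → ℝ)
    (hsum : ∑ b, ∑ c, q b c = 1) :
    shannonEntropy (margFst (etaPair η q)) =
      η * shannonEntropy (margFst q) - η * Real.logb 2 η - (1 - η) * Real.logb 2 (1 - η) := by
  rw [margFst_eta]
  unfold shannonEntropy
  rw [Fintype.sum_option]
  simp only []
  have hm : ∑ b, margFst q b = 1 := by simpa [margFst] using hsum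
  have : ∑ b : β, η * margFst q b * Real.logb 2 (η * margFst q b) =
      η * (∑ b, margFst q b * Real.logb 2 (margFst q b)) + (η * Real.logb 2 η) * (∑ b, margFst q b) := by
    rw [Finset.mul_sum, Finset.mul_sum, ← Finset.sum_add_distrib]
    exact Finset.sum_congr rfl fun b _ => eta_logb_split η (margFst q b)
  rw [this, hm]
  ring

end Aux

/-- In the single-detector model, the entropic Klyachko expression of the inefficient
model equals `η·K_E`; in particular, if `K_E > 0` then the inefficient model violates
the entropic Klyachko inequality for every detection efficiency `η ∈ (0,1]`. -/
theorem klyachko_single_detector {α : Fin 5 → Type*} [∀ i, Fintype (α i)]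
    (Q : ∀ i : Fin 5, α i → α (i + 1) → ℝ)
    (hnn : ∀ i a b, 0 ≤ Q i a b)
    (hsum : ∀ i, ∑ a, ∑ b, Q i a b = 1)
    (hcons : ∀ (i : Fin 5) (a : α (i + 1)), (∑ b, Q i b a) = ∑ c, Q (i + 1) a c) :
    (∀ η : ℝ, 0 ≤ η → η ≤ 1 →
      klyachkoE (α := fun i => Option (α i)) (fun i => etaPair η (Q i)) =
        η * klyachkoE Q) ∧
    (0 < klyachkoE Q → ∀ η : ℝ, 0 < η → η ≤ 1 →
      0 < klyachkoE (α := fun i => Option (α i)) (fun i => etaPair η (Q i))) := by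
  have key : ∀ η : ℝ,
      klyachkoE (α := fun i => Option (α i)) (fun i => etaPair η (Q i)) = η * klyachkoE Q := by
    intro η
    unfold klyachkoE
    rw [pairEntropy_eta η (Q 4) (hsum 4), pairEntropy_eta η (Q 0) (hsum 0),
      pairEntropy_eta η (Q 1) (hsum 1), pairEntropy_eta η (Q 2) (hsum 2),
      pairEntropy_eta η (Q 3) (hsum 3),
      shannon_marg_eta η (Q 1) (hsum 1), shannon_marg_eta η (Q 2) (hsum 2),
      shannon_marg_eta η (Q 3) (hsum 3)]
    ring
  refine ⟨fun η _ _ => key η, fun hK η hη _ => ?_⟩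
  rw [key η]
  exact mul_pos hη hK
end

section
/- (Two-detector inefficiency proposition.) Let p be a probability distribution on a finite product set S × T, with marginals p_A on S and p_B on T, and let η ∈ [0,1]. Define the distribution p^η on (S ∪ {∅}) × (T ∪ {∅}) by p^η(s,t) = η²·p(s,t), p^η(s,∅) = η(1−η)·p_A(s), p^η(∅,t) = (1−η)η·p_B(t), and p^η(∅,∅) = (1−η)². Then H(p^η) = η²·H(p) + η(1−η)·[H(p_A) + H(p_B)] + 2·h(η), and each single-component marginal of p^η has entropy η·H(p_A) + h(η) (respectively η·H(p_B) + h(η)), where h is the binary entropy. -/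
/-- The binary entropy `h(t) = −t log₂ t − (1−t) log₂ (1−t)`. -/
noncomputable def binEnt (t : ℝ) : ℝ :=
  -t * Real.logb 2 t - (1 - t) * Real.logb 2 (1 - t)

/-- The two-detector inefficient version of a joint distribution `p` on `S × T`:
each detector independently clicks with probability `η`, a no-click being registered
as the outcome `∅`. -/
noncomputable def etaTwoDetector {S T : Type*} [Fintype S] [Fintype T] (η : ℝ)
    (p : S → T → ℝ) : Option S → Option T → ℝ
  | some s, some t => η ^ 2 * p s t
  | some s, none => η * (1 - η) * (∑ t, p s t)
  | none, some t => (1 - η) * η * (∑ s, p s t)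
  | none, none => (1 - η) ^ 2

lemma mul_logb_mul (a x : ℝ) :
    a * x * Real.logb 2 (a * x) = x * (a * Real.logb 2 a) + a * (x * Real.logb 2 x) := by
  rcases eq_or_ne a 0 with ha | ha
  · simp [ha]
  rcases eq_or_ne x 0 with hx | hx
  · simp [hx]
  rw [Real.logb_mul ha hx]; ring

/-- Two-detector inefficiency: the joint entropy of the inefficient distribution is
`H(p^η) = η²·H(p) + η(1−η)·[H(p_A) + H(p_B)] + 2h(η)`, and each single-component
marginal has entropy `η·H(p_A) + h(η)` (resp. `η·H(p_B) + h(η)`). -/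
theorem two_detector_entropy {S T : Type*} [Fintype S] [Fintype T]
    (p : S → T → ℝ) (hp0 : ∀ s t, 0 ≤ p s t) (hp1 : ∑ s, ∑ t, p s t = 1)
    (η : ℝ) (hη0 : 0 ≤ η) (hη1 : η ≤ 1) :
    pairEntropy (etaTwoDetector η p) =
        η ^ 2 * pairEntropy p +
          η * (1 - η) *
            (shannonEntropy (fun s => ∑ t, p s t) + shannonEntropy (fun t => ∑ s, p s t)) +
          2 * binEnt η ∧
      shannonEntropy (fun os : Option S => ∑ ot, etaTwoDetector η p os ot) =
        η * shannonEntropy (fun s => ∑ t, p s t) + binEnt η ∧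
      shannonEntropy (fun ot : Option T => ∑ os, etaTwoDetector η p os ot) =
        η * shannonEntropy (fun t => ∑ s, p s t) + binEnt η := by
  have hB1 : ∑ t, ∑ s, p s t = 1 := by rw [Finset.sum_comm]; exact hp1
  have hsumA : ∀ (c : ℝ), ∑ s, (c * (∑ t, p s t)) * Real.logb 2 (c * (∑ t, p s t))
      = c * Real.logb 2 c + c * ∑ s, (∑ t, p s t) * Real.logb 2 (∑ t, p s t) := by
    intro c
    simp_rw [mul_logb_mul c, Finset.sum_add_distrib, ← Finset.sum_mul, ← Finset.mul_sum, hp1]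
    ring
  have hsumB : ∀ (c : ℝ), ∑ t, (c * (∑ s, p s t)) * Real.logb 2 (c * (∑ s, p s t))
      = c * Real.logb 2 c + c * ∑ t, (∑ s, p s t) * Real.logb 2 (∑ s, p s t) := by
    intro c
    simp_rw [mul_logb_mul c, Finset.sum_add_distrib, ← Finset.sum_mul, ← Finset.mul_sum, hB1]
    ring
  have hsumJ : ∑ s, ∑ t, (η ^ 2 * p s t) * Real.logb 2 (η ^ 2 * p s t)
      = η ^ 2 * Real.logb 2 (η ^ 2) + η ^ 2 * ∑ s, ∑ t, p s t * Real.logb 2 (p s t) := by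
    simp_rw [mul_logb_mul (η ^ 2), Finset.sum_add_distrib, ← Finset.sum_mul, ← Finset.mul_sum,
      hp1]
    ring
  have h1 : η ^ 2 * Real.logb 2 (η ^ 2) = 2 * (η * (η * Real.logb 2 η)) := by
    rw [pow_two, mul_logb_mul]; ring
  have h2 : (1 - η) ^ 2 * Real.logb 2 ((1 - η) ^ 2)
      = 2 * ((1 - η) * ((1 - η) * Real.logb 2 (1 - η))) := by
    rw [pow_two, mul_logb_mul]; ring
  have h3 := mul_logb_mul η (1 - η)
  have h4 := mul_logb_mul (1 - η) η
  refine ⟨?_, ?_, ?_⟩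
  · simp only [pairEntropy, shannonEntropy, binEnt, Fintype.sum_option, etaTwoDetector]
    rw [Finset.sum_add_distrib, hsumA (η * (1 - η)), hsumB ((1 - η) * η), hsumJ, h1, h2, h3, h4]
    ring
  · have hm1 : ∀ s : S, (∑ ot, etaTwoDetector η p (some s) ot) = η * ∑ t, p s t := by
      intro s
      rw [Fintype.sum_option]
      show η * (1 - η) * (∑ t, p s t) + ∑ t, η ^ 2 * p s t = _
      rw [← Finset.mul_sum]; ring
    have hm0 : (∑ ot, etaTwoDetector η p (none : Option S) ot) = 1 - η := by
      rw [Fintype.sum_option]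
      show (1 - η) ^ 2 + ∑ t, (1 - η) * η * (∑ s, p s t) = _
      rw [← Finset.mul_sum, hB1]; ring
    simp only [shannonEntropy, binEnt]
    rw [Fintype.sum_option (fun os : Option S =>
      (∑ ot, etaTwoDetector η p os ot) * Real.logb 2 (∑ ot, etaTwoDetector η p os ot))]
    simp only [hm0]
    simp_rw [hm1]
    rw [hsumA η]
    ring
  · have hn1 : ∀ t : T, (∑ os : Option S, etaTwoDetector η p os (some t)) = η * ∑ s, p s t := by
      intro t
      rw [Fintype.sum_option]
      show (1 - η) * η * (∑ s, p s t) + ∑ s, η ^ 2 * p s t = _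
      rw [← Finset.mul_sum]; ring
    have hn0 : (∑ os : Option S, etaTwoDetector η p os none) = 1 - η := by
      rw [Fintype.sum_option]
      show (1 - η) ^ 2 + ∑ s, η * (1 - η) * (∑ t, p s t) = _
      rw [← Finset.mul_sum, hp1]; ring
    simp only [shannonEntropy, binEnt]
    rw [Fintype.sum_option (fun ot : Option T =>
      (∑ os : Option S, etaTwoDetector η p os ot) * Real.logb 2 (∑ os : Option S, etaTwoDetector η p os ot))]
    simp only [hn0]
    simp_rw [hn1]
    rw [hsumB η]
    ring
end

section
/- (Entropic bilocality inequality, class 5.) Let A₀, A₁, B, C₀, C₁ be jointly distributed random variables taking values in finite sets such that the pair (A₀,A₁) is independent of the pair (C₀,C₁), i.e. H(A₀A₁C₀C₁) = H(A₀A₁) + H(C₀C₁). Then H(A₁) + H(C₀) + H(A₀B) ≤ H(A₁B) + H(A₀BC₀). -/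
namespace EntropyAux

open Finset Real

/-- Gibbs-type elementary inequality used termwise for submodularity. -/
lemma log_term_bound {q A B C D : ℝ} (hq : 0 ≤ q) (hqC : q ≤ C)
    (hCA : C ≤ A) (hCB : C ≤ B) (hCD : C ≤ D) :
    q * (Real.logb 2 A + Real.logb 2 B) - q * (Real.logb 2 C + Real.logb 2 D)
      ≤ (q * (A * B / (C * D)) - q) / Real.log 2 := by
  rcases eq_or_lt_of_le hq with h | h
  · rw [← h]; simp
  · have hC : 0 < C := lt_of_lt_of_le h hqC
    have hA : 0 < A := lt_of_lt_of_le hC hCA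
    have hB : 0 < B := lt_of_lt_of_le hC hCB
    have hD : 0 < D := lt_of_lt_of_le hC hCD
    have hr : 0 < A * B / (C * D) := by positivity
    have hlog2 : (0:ℝ) < Real.log 2 := Real.log_pos (by norm_num)
    have hlogeq : Real.logb 2 A + Real.logb 2 B - (Real.logb 2 C + Real.logb 2 D)
        = Real.logb 2 (A * B / (C * D)) := by
      rw [Real.logb_div (by positivity) (by positivity),
        Real.logb_mul (ne_of_gt hA) (ne_of_gt hB),
        Real.logb_mul (ne_of_gt hC) (ne_of_gt hD)]
    have hsub : Real.log (A * B / (C * D)) ≤ A * B / (C * D) - 1 :=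
      Real.log_le_sub_one_of_pos hr
    have : q * (Real.logb 2 A + Real.logb 2 B) - q * (Real.logb 2 C + Real.logb 2 D)
        = (q * Real.log (A * B / (C * D))) / Real.log 2 := by
      rw [← mul_sub, hlogeq, Real.logb]; ring
    rw [this, div_le_div_iff_of_pos_right hlog2]
    nlinarith [mul_le_mul_of_nonneg_left hsub h.le]

variable {Ω : Type*} [Fintype Ω]

/-- Probability mass of the fiber of `X` over `b`. -/
noncomputable def pm {β : Type*} [Fintype β] [DecidableEq β]
    (p : Ω → ℝ) (X : Ω → β) (b : β) : ℝ :=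
  ∑ ω ∈ Finset.univ.filter (fun ω => X ω = b), p ω

section basic

variable {β γ : Type*} [Fintype β] [DecidableEq β] [Fintype γ] [DecidableEq γ]
variable (p : Ω → ℝ)

lemma pm_nonneg (hp0 : ∀ ω, 0 ≤ p ω) (X : Ω → β) (b : β) : 0 ≤ pm p X b :=
  Finset.sum_nonneg fun ω _ => hp0 ω

lemma sum_pm (X : Ω → β) : ∑ b, pm p X b = ∑ ω, p ω := by
  simpa [pm] using Finset.sum_fiberwise (Finset.univ : Finset Ω) X p

lemma le_pm (hp0 : ∀ ω, 0 ≤ p ω) (X : Ω → β) (ω₀ : Ω) : p ω₀ ≤ pm p X (X ω₀) := by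
  apply Finset.single_le_sum (fun ω _ => hp0 ω)
  simp

lemma pm_comp_le (hp0 : ∀ ω, 0 ≤ p ω) (X : Ω → β) (g : β → γ) (t : β) :
    pm p X t ≤ pm p (fun ω => g (X ω)) (g t) := by
  apply Finset.sum_le_sum_of_subset_of_nonneg
  · intro ω hω
    simp only [Finset.mem_filter, Finset.mem_univ, true_and] at hω ⊢
    rw [hω]
  · exact fun ω _ _ => hp0 ω

lemma sum_fiber (X : Ω → β) (g : β → ℝ) :
    ∑ b, pm p X b * g b = ∑ ω, p ω * g (X ω) := by
  rw [← Finset.sum_fiberwise (Finset.univ : Finset Ω) X (fun ω => p ω * g (X ω))]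
  refine Finset.sum_congr rfl fun b _ => ?_
  rw [pm, Finset.sum_mul]
  refine Finset.sum_congr rfl fun ω hω => ?_
  rw [(Finset.mem_filter.mp hω).2]

lemma jointEntropy_eq (X : Ω → β) :
    jointEntropy p X = -∑ b, pm p X b * Real.logb 2 (pm p X b) := rfl

lemma jointEntropy_pointwise (X : Ω → β) :
    jointEntropy p X = -∑ ω, p ω * Real.logb 2 (pm p X (X ω)) := by
  rw [jointEntropy_eq, sum_fiber p X (fun b => Real.logb 2 (pm p X b))]

lemma jointEntropy_comp_le (hp0 : ∀ ω, 0 ≤ p ω) (X : Ω → β) (g : β → γ) :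
    jointEntropy p (fun ω => g (X ω)) ≤ jointEntropy p X := by
  rw [jointEntropy_pointwise, jointEntropy_pointwise]
  apply neg_le_neg
  apply Finset.sum_le_sum
  intro ω _
  rcases eq_or_lt_of_le (hp0 ω) with h | h
  · rw [← h]; simp
  · apply mul_le_mul_of_nonneg_left _ h.le
    have h1 : 0 < pm p X (X ω) := lt_of_lt_of_le h (le_pm p hp0 X ω)
    exact Real.logb_le_logb_of_le (by norm_num) h1 (pm_comp_le p hp0 X g (X ω))

lemma jointEntropy_congr (hp0 : ∀ ω, 0 ≤ p ω) (X : Ω → β) (Y : Ω → γ)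
    (f : β → γ) (g : γ → β) (hf : ∀ ω, f (X ω) = Y ω) (hg : ∀ ω, g (Y ω) = X ω) :
    jointEntropy p X = jointEntropy p Y := by
  have h1 : jointEntropy p (fun ω => f (X ω)) ≤ jointEntropy p X :=
    jointEntropy_comp_le p hp0 X f
  have h2 : jointEntropy p (fun ω => g (Y ω)) ≤ jointEntropy p Y :=
    jointEntropy_comp_le p hp0 Y g
  have e1 : (fun ω => f (X ω)) = Y := funext hf
  have e2 : (fun ω => g (Y ω)) = X := funext hg
  rw [e1] at h1; rw [e2] at h2
  linarith

end basic

section submod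

variable {β₁ β₂ β₃ : Type*} [Fintype β₁] [DecidableEq β₁]
  [Fintype β₂] [DecidableEq β₂] [Fintype β₃] [DecidableEq β₃]
variable (p : Ω → ℝ)

lemma marg_left (X : Ω → β₁) (Z : Ω → β₃) (z : β₃) :
    ∑ x, pm p (fun ω => (X ω, Z ω)) (x, z) = pm p Z z := by
  rw [pm, ← Finset.sum_fiberwise (Finset.univ.filter (fun ω => Z ω = z)) X p]
  refine Finset.sum_congr rfl fun x _ => ?_
  rw [pm]
  congr 1
  ext ω
  simp [Prod.ext_iff, and_comm]

/-- Submodularity of Shannon entropy (nonnegativity of conditional mutual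
information `I(X;Y|Z) ≥ 0`). -/
lemma submod (hp0 : ∀ ω, 0 ≤ p ω) (hp1 : ∑ ω, p ω = 1)
    (X : Ω → β₁) (Y : Ω → β₂) (Z : Ω → β₃) :
    jointEntropy p (fun ω => (X ω, Y ω, Z ω)) + jointEntropy p Z ≤
      jointEntropy p (fun ω => (X ω, Z ω)) + jointEntropy p (fun ω => (Y ω, Z ω)) := by
  classical
  have hlog2 : (0:ℝ) < Real.log 2 := Real.log_pos (by norm_num)
  set F : Ω → β₁ × β₂ × β₃ := fun ω => (X ω, Y ω, Z ω) with hF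
  set R : β₁ × β₂ × β₃ → ℝ := fun t =>
    pm p (fun ω => (X ω, Z ω)) (t.1, t.2.2) * pm p (fun ω => (Y ω, Z ω)) (t.2.1, t.2.2) /
      (pm p F t * pm p Z t.2.2) with hR
  -- the expected likelihood ratio is at most 1
  have claim : ∑ ω, p ω * R (F ω) ≤ 1 := by
    rw [← sum_fiber p F R]
    have step1 : ∑ t, pm p F t * R t ≤
        ∑ t : β₁ × β₂ × β₃,
          pm p (fun ω => (X ω, Z ω)) (t.1, t.2.2) * pm p (fun ω => (Y ω, Z ω)) (t.2.1, t.2.2) /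
            pm p Z t.2.2 := by
      apply Finset.sum_le_sum
      intro t _
      have h1 := pm_nonneg p hp0 (fun ω => (X ω, Z ω)) (t.1, t.2.2)
      have h2 := pm_nonneg p hp0 (fun ω => (Y ω, Z ω)) (t.2.1, t.2.2)
      have h3 := pm_nonneg p hp0 Z t.2.2
      rcases eq_or_lt_of_le (pm_nonneg p hp0 F t) with h | h
      · rw [← h, zero_mul]
        positivity
      · have hdz : 0 < pm p Z t.2.2 := by
          refine lt_of_lt_of_le h ?_
          have := pm_comp_le p hp0 F (fun t => t.2.2) t
          simpa [hF] using this
        apply le_of_eq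
        rw [hR]
        field_simp
    refine le_trans step1 (le_of_eq ?_)
    have step2 : ∀ yz : β₂ × β₃,
        (∑ x, pm p (fun ω => (X ω, Z ω)) (x, yz.2) * pm p (fun ω => (Y ω, Z ω)) (yz.1, yz.2) /
          pm p Z yz.2) = pm p (fun ω => (Y ω, Z ω)) yz := by
      rintro ⟨y, z⟩
      simp only
      rw [← Finset.sum_div, ← Finset.sum_mul, marg_left p X Z z]
      rcases eq_or_lt_of_le (pm_nonneg p hp0 Z z) with h | h
      · have hyz : pm p (fun ω => (Y ω, Z ω)) (y, z) = 0 := by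
          refine le_antisymm ?_ (pm_nonneg p hp0 _ _)
          rw [h]
          have := pm_comp_le p hp0 (fun ω => (Y ω, Z ω)) (fun t => t.2) (y, z)
          simpa using this
        rw [← h, hyz]
        simp
      · rw [mul_comm, mul_div_assoc, div_self (ne_of_gt h), mul_one]
    calc (∑ t : β₁ × β₂ × β₃,
          pm p (fun ω => (X ω, Z ω)) (t.1, t.2.2) * pm p (fun ω => (Y ω, Z ω)) (t.2.1, t.2.2) /
            pm p Z t.2.2)
        = ∑ yz : β₂ × β₃, ∑ x,
            pm p (fun ω => (X ω, Z ω)) (x, yz.2) * pm p (fun ω => (Y ω, Z ω)) (yz.1, yz.2) /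
              pm p Z yz.2 := by
          rw [Fintype.sum_prod_type, Finset.sum_comm]
      _ = ∑ yz : β₂ × β₃, pm p (fun ω => (Y ω, Z ω)) yz :=
          Finset.sum_congr rfl fun yz _ => step2 yz
      _ = 1 := by rw [sum_pm, hp1]
  -- termwise log inequality
  have hterm : ∀ ω,
      p ω * Real.logb 2 (pm p (fun ω => (X ω, Z ω)) (X ω, Z ω))
      + p ω * Real.logb 2 (pm p (fun ω => (Y ω, Z ω)) (Y ω, Z ω))
      - p ω * Real.logb 2 (pm p F (F ω))
      - p ω * Real.logb 2 (pm p Z (Z ω))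
      ≤ (p ω * R (F ω) - p ω) / Real.log 2 := by
    intro ω
    have hca : pm p F (F ω) ≤ pm p (fun ω => (X ω, Z ω)) (X ω, Z ω) := by
      have := pm_comp_le p hp0 F (fun t => (t.1, t.2.2)) (F ω)
      simpa [hF] using this
    have hcb : pm p F (F ω) ≤ pm p (fun ω => (Y ω, Z ω)) (Y ω, Z ω) := by
      have := pm_comp_le p hp0 F (fun t => (t.2.1, t.2.2)) (F ω)
      simpa [hF] using this
    have hcd : pm p F (F ω) ≤ pm p Z (Z ω) := by
      have := pm_comp_le p hp0 F (fun t => t.2.2) (F ω)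
      simpa [hF] using this
    have hbound := log_term_bound (hp0 ω) (le_pm p hp0 F ω) hca hcb hcd
    have hRω : R (F ω) =
        pm p (fun ω => (X ω, Z ω)) (X ω, Z ω) * pm p (fun ω => (Y ω, Z ω)) (Y ω, Z ω) /
          (pm p F (F ω) * pm p Z (Z ω)) := rfl
    rw [hRω]
    linarith [hbound]
  -- sum up
  have sum_bound :
      (∑ ω, p ω * Real.logb 2 (pm p (fun ω => (X ω, Z ω)) (X ω, Z ω)))
      + (∑ ω, p ω * Real.logb 2 (pm p (fun ω => (Y ω, Z ω)) (Y ω, Z ω)))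
      - (∑ ω, p ω * Real.logb 2 (pm p F (F ω)))
      - (∑ ω, p ω * Real.logb 2 (pm p Z (Z ω))) ≤ 0 := by
    have h1 : ∑ ω,
        (p ω * Real.logb 2 (pm p (fun ω => (X ω, Z ω)) (X ω, Z ω))
        + p ω * Real.logb 2 (pm p (fun ω => (Y ω, Z ω)) (Y ω, Z ω))
        - p ω * Real.logb 2 (pm p F (F ω))
        - p ω * Real.logb 2 (pm p Z (Z ω)))
        ≤ ∑ ω, (p ω * R (F ω) - p ω) / Real.log 2 :=
      Finset.sum_le_sum fun ω _ => hterm ω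
    have h2 : ∑ ω, (p ω * R (F ω) - p ω) / Real.log 2
        = ((∑ ω, p ω * R (F ω)) - ∑ ω, p ω) / Real.log 2 := by
      rw [← Finset.sum_div, Finset.sum_sub_distrib]
    have h3 : ((∑ ω, p ω * R (F ω)) - ∑ ω, p ω) / Real.log 2 ≤ 0 := by
      apply div_nonpos_of_nonpos_of_nonneg _ hlog2.le
      rw [hp1]
      linarith [claim]
    have h4 : ∑ ω,
        (p ω * Real.logb 2 (pm p (fun ω => (X ω, Z ω)) (X ω, Z ω))
        + p ω * Real.logb 2 (pm p (fun ω => (Y ω, Z ω)) (Y ω, Z ω))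
        - p ω * Real.logb 2 (pm p F (F ω))
        - p ω * Real.logb 2 (pm p Z (Z ω)))
        = (∑ ω, p ω * Real.logb 2 (pm p (fun ω => (X ω, Z ω)) (X ω, Z ω)))
        + (∑ ω, p ω * Real.logb 2 (pm p (fun ω => (Y ω, Z ω)) (Y ω, Z ω)))
        - (∑ ω, p ω * Real.logb 2 (pm p F (F ω)))
        - (∑ ω, p ω * Real.logb 2 (pm p Z (Z ω))) := by
      rw [Finset.sum_sub_distrib, Finset.sum_sub_distrib, Finset.sum_add_distrib]
    linarith [h1, h2.symm ▸ h1, h3]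
  rw [jointEntropy_pointwise, jointEntropy_pointwise, jointEntropy_pointwise,
    jointEntropy_pointwise]
  linarith [sum_bound]

end submod

end EntropyAux

/-- Entropic bilocality inequality (class 5 of Table II): for jointly distributed
finite random variables `A₀, A₁, B, C₀, C₁` with `(A₀,A₁)` independent of `(C₀,C₁)`
(in the entropic sense `H(A₀A₁C₀C₁) = H(A₀A₁) + H(C₀C₁)`), one has
`H(A₁) + H(C₀) + H(A₀B) ≤ H(A₁B) + H(A₀BC₀)`. -/
theorem entropic_bilocality_class5 {Ω α₀ α₁ β γ₀ γ₁ : Type*} [Fintype Ω]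
    [Fintype α₀] [DecidableEq α₀] [Fintype α₁] [DecidableEq α₁]
    [Fintype β] [DecidableEq β]
    [Fintype γ₀] [DecidableEq γ₀] [Fintype γ₁] [DecidableEq γ₁]
    (p : Ω → ℝ) (hp0 : ∀ ω, 0 ≤ p ω) (hp1 : ∑ ω, p ω = 1)
    (A₀ : Ω → α₀) (A₁ : Ω → α₁) (B : Ω → β) (C₀ : Ω → γ₀) (C₁ : Ω → γ₁)
    (hind : jointEntropy p (fun ω => (A₀ ω, A₁ ω, C₀ ω, C₁ ω)) =
      jointEntropy p (fun ω => (A₀ ω, A₁ ω)) + jointEntropy p (fun ω => (C₀ ω, C₁ ω))) :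
    jointEntropy p A₁ +
      jointEntropy p C₀ +
      jointEntropy p (fun ω => (A₀ ω, B ω)) ≤
      jointEntropy p (fun ω => (A₁ ω, B ω)) +
      jointEntropy p (fun ω => (A₀ ω, B ω, C₀ ω)) := by
  classical
  have e1 := EntropyAux.submod p hp0 hp1 C₁ (fun ω => (A₀ ω, B ω)) C₀
  have e2 := EntropyAux.submod p hp0 hp1 A₁ (fun ω => (C₀ ω, C₁ ω)) (fun ω => (A₀ ω, B ω))
  have e4 := EntropyAux.submod p hp0 hp1 A₀ B A₁
  have e3 : jointEntropy p (fun ω => (A₀ ω, A₁ ω, C₀ ω, C₁ ω)) ≤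
      jointEntropy p (fun ω => (A₁ ω, (C₀ ω, C₁ ω), (A₀ ω, B ω))) := by
    have := EntropyAux.jointEntropy_comp_le p hp0
      (fun ω => (A₁ ω, (C₀ ω, C₁ ω), (A₀ ω, B ω)))
      (fun t => (t.2.2.1, t.1, t.2.1.1, t.2.1.2))
    exact this
  have q1 : jointEntropy p (fun ω => (C₁ ω, C₀ ω)) = jointEntropy p (fun ω => (C₀ ω, C₁ ω)) :=
    EntropyAux.jointEntropy_congr p hp0 _ _ Prod.swap Prod.swap
      (fun ω => rfl) (fun ω => rfl)
  have q2 : jointEntropy p (fun ω => ((A₀ ω, B ω), C₀ ω)) =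
      jointEntropy p (fun ω => (A₀ ω, B ω, C₀ ω)) :=
    EntropyAux.jointEntropy_congr p hp0 _ _
      (fun t => (t.1.1, t.1.2, t.2)) (fun t => ((t.1, t.2.1), t.2.2))
      (fun ω => rfl) (fun ω => rfl)
  have q3 : jointEntropy p (fun ω => (C₁ ω, (A₀ ω, B ω), C₀ ω)) =
      jointEntropy p (fun ω => ((C₀ ω, C₁ ω), (A₀ ω, B ω))) :=
    EntropyAux.jointEntropy_congr p hp0 _ _
      (fun t => ((t.2.2, t.1), t.2.1)) (fun s => (s.1.2, s.2, s.1.1))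
      (fun ω => rfl) (fun ω => rfl)
  have q4 : jointEntropy p (fun ω => (B ω, A₁ ω)) = jointEntropy p (fun ω => (A₁ ω, B ω)) :=
    EntropyAux.jointEntropy_congr p hp0 _ _ Prod.swap Prod.swap
      (fun ω => rfl) (fun ω => rfl)
  have q5 : jointEntropy p (fun ω => (A₀ ω, B ω, A₁ ω)) =
      jointEntropy p (fun ω => (A₁ ω, (A₀ ω, B ω))) :=
    EntropyAux.jointEntropy_congr p hp0 _ _
      (fun t => (t.2.2, t.1, t.2.1)) (fun s => (s.2.1, s.2.2, s.1))
      (fun ω => rfl) (fun ω => rfl)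
  linarith [e1, e2, e3, e4, q1, q2, q3, q4, q5, hind]
end

section
/- (Entropic bilocality inequality, class 8.) Let A₀, A₁, B, C₀, C₁ be jointly distributed random variables taking values in finite sets such that the pair (A₀,A₁) is independent of the pair (C₀,C₁), i.e. H(A₀A₁C₀C₁) = H(A₀A₁) + H(C₀C₁). Then H(A₀) + H(C₀) + H(A₁B) + H(A₀BC₁) ≤ H(A₀B) + H(A₀BC₀) + H(A₁BC₁). -/
open Finset Real

section Aux

set_option linter.unusedSectionVars false

variable {Ω β γ δ : Type*} [Fintype Ω] [Fintype β] [DecidableEq β]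
  [Fintype γ] [DecidableEq γ] [Fintype δ] [DecidableEq δ]

/-- Entropy is invariant under injective relabeling. -/
lemma jointEntropy_comp (p : Ω → ℝ) (X : Ω → β) (f : β → γ)
    (hf : Function.Injective f) :
    jointEntropy p (fun ω => f (X ω)) = jointEntropy p X := by
  unfold jointEntropy shannonEntropy
  congr 1
  rw [← Finset.sum_subset (Finset.subset_univ (univ.image f))]
  · rw [Finset.sum_image (fun x _ y _ h => hf h)]
    refine Finset.sum_congr rfl fun b _ => ?_
    simp only [show (fun ω => f (X ω) = f b) = fun ω => X ω = b from
      funext fun ω => by simp [hf.eq_iff]]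
  · intro c _ hc
    have : (univ.filter fun ω => f (X ω) = c) = ∅ := by
      refine Finset.filter_eq_empty_iff.mpr fun ω _ => ?_
      intro h
      exact hc (Finset.mem_image.mpr ⟨X ω, Finset.mem_univ _, h⟩)
    simp [this]

lemma mono_aux {β γ : Type*} [Fintype β] [Fintype γ] (r : β × γ → ℝ)
    (h0 : ∀ i, 0 ≤ r i) :
    shannonEntropy (fun b => ∑ c, r (b, c)) ≤ shannonEntropy r := by
  unfold shannonEntropy
  rw [neg_le_neg_iff, Fintype.sum_prod_type]
  refine Finset.sum_le_sum fun b _ => ?_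
  rw [Finset.sum_mul]
  refine Finset.sum_le_sum fun c _ => ?_
  rcases eq_or_lt_of_le (h0 (b, c)) with h | h
  · simp [← h]
  · refine mul_le_mul_of_nonneg_left ?_ (h0 (b,c))
    exact Real.logb_le_logb_of_le one_lt_two h
      (Finset.single_le_sum (fun c _ => h0 (b, c)) (Finset.mem_univ c))

lemma submod_aux {β γ δ : Type*} [Fintype β] [Fintype γ] [Fintype δ]
    (r : β × γ × δ → ℝ) (h0 : ∀ i, 0 ≤ r i) (h1 : ∑ i, r i = 1) :
    shannonEntropy r + shannonEntropy (fun c : γ => ∑ b, ∑ d, r (b, c, d)) ≤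
    shannonEntropy (fun bc : β × γ => ∑ d, r (bc.1, bc.2, d)) +
    shannonEntropy (fun cd : γ × δ => ∑ b, r (b, cd.1, cd.2)) := by
  set s : β × γ → ℝ := fun bc => ∑ d, r (bc.1, bc.2, d) with hs_def
  set t : γ × δ → ℝ := fun cd => ∑ b, r (b, cd.1, cd.2) with ht_def
  set u : γ → ℝ := fun c => ∑ b, ∑ d, r (b, c, d) with hu_def
  have hs0 : ∀ b c, 0 ≤ s (b, c) := fun b c => Finset.sum_nonneg fun d _ => h0 _
  have ht0 : ∀ c d, 0 ≤ t (c, d) := fun c d => Finset.sum_nonneg fun b _ => h0 _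
  have hu0 : ∀ c, 0 ≤ u c := fun c => Finset.sum_nonneg fun b _ =>
    Finset.sum_nonneg fun d _ => h0 _
  -- triple-sum identities
  have hr3 : ∑ i, r i = ∑ b, ∑ c, ∑ d, r (b, c, d) := by
    rw [Fintype.sum_prod_type]
    exact Finset.sum_congr rfl fun b _ => Fintype.sum_prod_type _
  have hS : ∑ x, s x * logb 2 (s x) = ∑ b, ∑ c, ∑ d, r (b, c, d) * logb 2 (s (b, c)) := by
    rw [Fintype.sum_prod_type]
    exact Finset.sum_congr rfl fun b _ => Finset.sum_congr rfl fun c _ =>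
      Finset.sum_mul univ (fun d => r (b, c, d)) _
  have hT : ∑ x, t x * logb 2 (t x) = ∑ b, ∑ c, ∑ d, r (b, c, d) * logb 2 (t (c, d)) := by
    calc ∑ x, t x * logb 2 (t x)
        = ∑ c, ∑ d, ∑ b, r (b, c, d) * logb 2 (t (c, d)) := by
          rw [Fintype.sum_prod_type]
          exact Finset.sum_congr rfl fun c _ => Finset.sum_congr rfl fun d _ =>
            Finset.sum_mul univ (fun b => r (b, c, d)) _
      _ = ∑ c, ∑ b, ∑ d, r (b, c, d) * logb 2 (t (c, d)) :=
          Finset.sum_congr rfl fun c _ => Finset.sum_comm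
      _ = ∑ b, ∑ c, ∑ d, r (b, c, d) * logb 2 (t (c, d)) := Finset.sum_comm
  have hU : ∑ c, u c * logb 2 (u c) = ∑ b, ∑ c, ∑ d, r (b, c, d) * logb 2 (u c) := by
    rw [Finset.sum_comm]
    refine Finset.sum_congr rfl fun c _ => ?_
    rw [hu_def]
    simp only [Finset.sum_mul]
  -- termwise bound
  have hterm : ∀ b c d, r (b, c, d) * (logb 2 (s (b, c)) + logb 2 (t (c, d))
      - logb 2 (r (b, c, d)) - logb 2 (u c))
      ≤ (s (b, c) * t (c, d) / u c - r (b, c, d)) / Real.log 2 := by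
    intro b c d
    rcases eq_or_lt_of_le (h0 (b, c, d)) with h | h
    · rw [← h]
      simp only [zero_mul, sub_zero]
      exact div_nonneg (div_nonneg (mul_nonneg (hs0 b c) (ht0 c d)) (hu0 c))
        (Real.log_nonneg one_le_two)
    · have hsr : r (b, c, d) ≤ s (b, c) :=
        Finset.single_le_sum (fun d' _ => h0 (b, c, d')) (Finset.mem_univ d)
      have htr : r (b, c, d) ≤ t (c, d) :=
        Finset.single_le_sum (fun b' _ => h0 (b', c, d)) (Finset.mem_univ b)
      have hur : r (b, c, d) ≤ u c := by
        calc r (b, c, d) ≤ ∑ d', r (b, c, d') := hsr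
        _ ≤ u c := Finset.single_le_sum (f := fun b' => ∑ d', r (b', c, d'))
            (fun b' _ => Finset.sum_nonneg fun d' _ => h0 _) (Finset.mem_univ b)
      have hs' : 0 < s (b, c) := lt_of_lt_of_le h hsr
      have ht' : 0 < t (c, d) := lt_of_lt_of_le h htr
      have hu' : 0 < u c := lt_of_lt_of_le h hur
      have hx : 0 < s (b, c) * t (c, d) / (r (b, c, d) * u c) := by positivity
      have hlog : logb 2 (s (b, c)) + logb 2 (t (c, d)) - logb 2 (r (b, c, d)) - logb 2 (u c)
          = Real.log (s (b, c) * t (c, d) / (r (b, c, d) * u c)) / Real.log 2 := by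
        rw [Real.log_div (by positivity) (by positivity), Real.log_mul hs'.ne' ht'.ne',
          Real.log_mul h.ne' hu'.ne']
        simp only [Real.logb]
        ring
      rw [hlog]
      have hb2 := Real.log_le_sub_one_of_pos hx
      have hl2 : (0:ℝ) < Real.log 2 := Real.log_pos one_lt_two
      have key : r (b, c, d) * Real.log (s (b, c) * t (c, d) / (r (b, c, d) * u c))
          ≤ s (b, c) * t (c, d) / u c - r (b, c, d) := by
        calc r (b, c, d) * Real.log (s (b, c) * t (c, d) / (r (b, c, d) * u c))
            ≤ r (b, c, d) * (s (b, c) * t (c, d) / (r (b, c, d) * u c) - 1) :=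
              mul_le_mul_of_nonneg_left hb2 h.le
          _ = s (b, c) * t (c, d) / u c - r (b, c, d) := by
              field_simp
      calc r (b, c, d) * (Real.log (s (b, c) * t (c, d) / (r (b, c, d) * u c)) / Real.log 2)
          = r (b, c, d) * Real.log (s (b, c) * t (c, d) / (r (b, c, d) * u c)) / Real.log 2 := by
            ring
        _ ≤ (s (b, c) * t (c, d) / u c - r (b, c, d)) / Real.log 2 := by gcongr
  -- sum the termwise bounds
  have hr1 : ∑ b, ∑ c, ∑ d, r (b, c, d) = 1 := by rw [← hr3]; exact h1
  have hst : ∑ b, ∑ c, ∑ d, s (b, c) * t (c, d) / u c = 1 := by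
    rw [Finset.sum_comm]
    have huc : ∀ c, ∑ b, ∑ d, s (b, c) * t (c, d) / u c = u c := by
      intro c
      have e1 : ∑ b, ∑ d, s (b, c) * t (c, d) / u c
          = (∑ b, s (b, c)) * (∑ d, t (c, d)) / u c := by
        rw [Finset.sum_mul, Finset.sum_div]
        refine Finset.sum_congr rfl fun b _ => ?_
        rw [Finset.mul_sum, Finset.sum_div]
      have e2 : ∑ b, s (b, c) = u c := rfl
      have e3 : ∑ d, t (c, d) = u c := Finset.sum_comm
      rw [e1, e2, e3]
      rcases eq_or_ne (u c) 0 with h | h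
      · simp [h]
      · field_simp
    calc ∑ c, ∑ b, ∑ d, s (b, c) * t (c, d) / u c = ∑ c, u c :=
          Finset.sum_congr rfl fun c _ => huc c
      _ = ∑ c, ∑ b, ∑ d, r (b, c, d) := rfl
      _ = ∑ b, ∑ c, ∑ d, r (b, c, d) := Finset.sum_comm
      _ = 1 := hr1
  have hsum : ∑ b, ∑ c, ∑ d, (s (b, c) * t (c, d) / u c - r (b, c, d)) / Real.log 2 = 0 := by
    have e : ∑ b, ∑ c, ∑ d, (s (b, c) * t (c, d) / u c - r (b, c, d)) / Real.log 2
        = ((∑ b, ∑ c, ∑ d, s (b, c) * t (c, d) / u c) - ∑ b, ∑ c, ∑ d, r (b, c, d))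
          / Real.log 2 := by
      simp only [← Finset.sum_div, Finset.sum_sub_distrib]
    rw [e, hst, hr1, sub_self, zero_div]
  have main : ∑ b, ∑ c, ∑ d, r (b, c, d) * (logb 2 (s (b, c)) + logb 2 (t (c, d))
      - logb 2 (r (b, c, d)) - logb 2 (u c)) ≤ 0 := by
    calc ∑ b, ∑ c, ∑ d, r (b, c, d) * (logb 2 (s (b, c)) + logb 2 (t (c, d))
          - logb 2 (r (b, c, d)) - logb 2 (u c))
        ≤ ∑ b, ∑ c, ∑ d, (s (b, c) * t (c, d) / u c - r (b, c, d)) / Real.log 2 :=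
          Finset.sum_le_sum fun b _ => Finset.sum_le_sum fun c _ =>
            Finset.sum_le_sum fun d _ => hterm b c d
      _ = 0 := hsum
  have hR : ∑ i, r i * logb 2 (r i) = ∑ b, ∑ c, ∑ d, r (b, c, d) * logb 2 (r (b, c, d)) := by
    rw [Fintype.sum_prod_type]
    exact Finset.sum_congr rfl fun b _ => Fintype.sum_prod_type _
  simp only [mul_add, mul_sub, Finset.sum_add_distrib, Finset.sum_sub_distrib] at main
  rw [← hS, ← hT, ← hU, ← hR] at main
  unfold shannonEntropy
  linarith

lemma marg_snd (p : Ω → ℝ) (X : Ω → β) (Y : Ω → γ) (b : β) :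
    ∑ c, ∑ ω ∈ univ.filter (fun ω => (X ω, Y ω) = (b, c)), p ω
      = ∑ ω ∈ univ.filter (fun ω => X ω = b), p ω := by
  simp only [Finset.sum_filter, Prod.mk.injEq, ite_and]
  rw [Finset.sum_comm]
  congr 1; funext ω
  by_cases h : X ω = b <;> simp [h, Finset.sum_ite_eq']

lemma marg3_xy (p : Ω → ℝ) (X : Ω → β) (Y : Ω → γ) (Z : Ω → δ) (b : β) (c : γ) :
    ∑ d, ∑ ω ∈ univ.filter (fun ω => (X ω, Y ω, Z ω) = (b, c, d)), p ω
      = ∑ ω ∈ univ.filter (fun ω => (X ω, Y ω) = (b, c)), p ω := by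
  simp only [Finset.sum_filter, Prod.mk.injEq, ite_and]
  rw [Finset.sum_comm]
  congr 1; funext ω
  by_cases h1 : X ω = b <;> by_cases h2 : Y ω = c <;>
    simp [h1, h2, Finset.sum_ite_eq']

lemma marg3_yz (p : Ω → ℝ) (X : Ω → β) (Y : Ω → γ) (Z : Ω → δ) (c : γ) (d : δ) :
    ∑ b, ∑ ω ∈ univ.filter (fun ω => (X ω, Y ω, Z ω) = (b, c, d)), p ω
      = ∑ ω ∈ univ.filter (fun ω => (Y ω, Z ω) = (c, d)), p ω := by
  simp only [Finset.sum_filter, Prod.mk.injEq, ite_and]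
  rw [Finset.sum_comm]
  congr 1; funext ω
  by_cases h1 : Y ω = c <;> by_cases h2 : Z ω = d <;>
    simp [h1, h2, Finset.sum_ite_eq']

lemma marg3_y (p : Ω → ℝ) (X : Ω → β) (Y : Ω → γ) (Z : Ω → δ) (c : γ) :
    ∑ b, ∑ d, ∑ ω ∈ univ.filter (fun ω => (X ω, Y ω, Z ω) = (b, c, d)), p ω
      = ∑ ω ∈ univ.filter (fun ω => Y ω = c), p ω := by
  calc ∑ b, ∑ d, ∑ ω ∈ univ.filter (fun ω => (X ω, Y ω, Z ω) = (b, c, d)), p ω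
      = ∑ b, ∑ ω ∈ univ.filter (fun ω => (X ω, Y ω) = (b, c)), p ω :=
        Finset.sum_congr rfl fun b _ => marg3_xy p X Y Z b c
    _ = ∑ ω ∈ univ.filter (fun ω => Y ω = c), p ω := by
        simp only [Finset.sum_filter, Prod.mk.injEq, ite_and]
        rw [Finset.sum_comm]
        congr 1; funext ω
        by_cases h : Y ω = c <;> simp [h, Finset.sum_ite_eq']

lemma jointEntropy_mono (p : Ω → ℝ) (hp0 : ∀ ω, 0 ≤ p ω) (X : Ω → β) (Y : Ω → γ) :
    jointEntropy p X ≤ jointEntropy p (fun ω => (X ω, Y ω)) := by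
  have h := mono_aux (fun i : β × γ => ∑ ω ∈ univ.filter (fun ω => (X ω, Y ω) = i), p ω)
    (fun i => Finset.sum_nonneg fun ω _ => hp0 ω)
  unfold jointEntropy
  have e : (fun b => ∑ ω ∈ univ.filter (fun ω => X ω = b), p ω)
      = fun b => ∑ c, ∑ ω ∈ univ.filter (fun ω => (X ω, Y ω) = (b, c)), p ω :=
    funext fun b => (marg_snd p X Y b).symm
  rw [e]
  exact h

lemma jointEntropy_submod (p : Ω → ℝ) (hp0 : ∀ ω, 0 ≤ p ω) (hp1 : ∑ ω, p ω = 1)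
    (X : Ω → β) (Y : Ω → γ) (Z : Ω → δ) :
    jointEntropy p (fun ω => (X ω, Y ω, Z ω)) + jointEntropy p Y ≤
    jointEntropy p (fun ω => (X ω, Y ω)) + jointEntropy p (fun ω => (Y ω, Z ω)) := by
  have h0 : ∀ i : β × γ × δ,
      0 ≤ ∑ ω ∈ univ.filter (fun ω => (X ω, Y ω, Z ω) = i), p ω :=
    fun i => Finset.sum_nonneg fun ω _ => hp0 ω
  have h1 : ∑ i : β × γ × δ, ∑ ω ∈ univ.filter (fun ω => (X ω, Y ω, Z ω) = i), p ω = 1 := by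
    rw [Finset.sum_fiberwise univ (fun ω => (X ω, Y ω, Z ω)) p]
    exact hp1
  have h := submod_aux (fun i : β × γ × δ =>
    ∑ ω ∈ univ.filter (fun ω => (X ω, Y ω, Z ω) = i), p ω) h0 h1
  unfold jointEntropy
  have eY : (fun c => ∑ ω ∈ univ.filter (fun ω => Y ω = c), p ω)
      = fun c => ∑ b, ∑ d, ∑ ω ∈ univ.filter (fun ω => (X ω, Y ω, Z ω) = (b, c, d)), p ω :=
    funext fun c => (marg3_y p X Y Z c).symm
  have eXY : (fun bc : β × γ => ∑ ω ∈ univ.filter (fun ω => (X ω, Y ω) = bc), p ω)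
      = fun bc : β × γ =>
        ∑ d, ∑ ω ∈ univ.filter (fun ω => (X ω, Y ω, Z ω) = (bc.1, bc.2, d)), p ω :=
    funext fun bc => (marg3_xy p X Y Z bc.1 bc.2).symm
  have eYZ : (fun cd : γ × δ => ∑ ω ∈ univ.filter (fun ω => (Y ω, Z ω) = cd), p ω)
      = fun cd : γ × δ =>
        ∑ b, ∑ ω ∈ univ.filter (fun ω => (X ω, Y ω, Z ω) = (b, cd.1, cd.2)), p ω :=
    funext fun cd => (marg3_yz p X Y Z cd.1 cd.2).symm
  rw [eY, eXY, eYZ]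
  exact h

end Aux

/-- Entropic bilocality inequality (class 8 of Table II): for jointly distributed
finite random variables `A₀, A₁, B, C₀, C₁` with `(A₀,A₁)` independent of `(C₀,C₁)`
(in the entropic sense `H(A₀A₁C₀C₁) = H(A₀A₁) + H(C₀C₁)`), one has
`H(A₀) + H(C₀) + H(A₁B) + H(A₀BC₁) ≤ H(A₀B) + H(A₀BC₀) + H(A₁BC₁)`. -/
theorem entropic_bilocality_class8 {Ω α₀ α₁ β γ₀ γ₁ : Type*} [Fintype Ω]
    [Fintype α₀] [DecidableEq α₀] [Fintype α₁] [DecidableEq α₁]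
    [Fintype β] [DecidableEq β]
    [Fintype γ₀] [DecidableEq γ₀] [Fintype γ₁] [DecidableEq γ₁]
    (p : Ω → ℝ) (hp0 : ∀ ω, 0 ≤ p ω) (hp1 : ∑ ω, p ω = 1)
    (A₀ : Ω → α₀) (A₁ : Ω → α₁) (B : Ω → β) (C₀ : Ω → γ₀) (C₁ : Ω → γ₁)
    (hind : jointEntropy p (fun ω => (A₀ ω, A₁ ω, C₀ ω, C₁ ω)) =
      jointEntropy p (fun ω => (A₀ ω, A₁ ω)) + jointEntropy p (fun ω => (C₀ ω, C₁ ω))) :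
    jointEntropy p A₀ +
      jointEntropy p C₀ +
      jointEntropy p (fun ω => (A₁ ω, B ω)) +
      jointEntropy p (fun ω => (A₀ ω, B ω, C₁ ω)) ≤
      jointEntropy p (fun ω => (A₀ ω, B ω)) +
      jointEntropy p (fun ω => (A₀ ω, B ω, C₀ ω)) +
      jointEntropy p (fun ω => (A₁ ω, B ω, C₁ ω)) := by

  -- canonical auxiliary entropies
  set H5 := jointEntropy p (fun ω => ((A₀ ω, A₁ ω, C₀ ω, C₁ ω), B ω)) with hH5
  -- (1) monotonicity
  have M1 : jointEntropy p (fun ω => (A₀ ω, A₁ ω, C₀ ω, C₁ ω)) ≤ H5 :=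
    jointEntropy_mono p hp0 (fun ω => (A₀ ω, A₁ ω, C₀ ω, C₁ ω)) B
  -- submodularity instances
  have S2 : jointEntropy p (fun ω => (A₀ ω, (A₁ ω, B ω), C₁ ω))
      + jointEntropy p (fun ω => (A₁ ω, B ω))
      ≤ jointEntropy p (fun ω => (A₀ ω, A₁ ω, B ω))
      + jointEntropy p (fun ω => ((A₁ ω, B ω), C₁ ω)) :=
    jointEntropy_submod p hp0 hp1 A₀ (fun ω => (A₁ ω, B ω)) C₁
  have S3 : jointEntropy p (fun ω => (A₀ ω, (B ω, C₀ ω), C₁ ω))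
      + jointEntropy p (fun ω => (B ω, C₀ ω))
      ≤ jointEntropy p (fun ω => (A₀ ω, B ω, C₀ ω))
      + jointEntropy p (fun ω => ((B ω, C₀ ω), C₁ ω)) :=
    jointEntropy_submod p hp0 hp1 A₀ (fun ω => (B ω, C₀ ω)) C₁
  have S4 : jointEntropy p (fun ω => (A₁ ω, A₀ ω, B ω)) + jointEntropy p A₀
      ≤ jointEntropy p (fun ω => (A₁ ω, A₀ ω))
      + jointEntropy p (fun ω => (A₀ ω, B ω)) :=
    jointEntropy_submod p hp0 hp1 A₁ A₀ B
  have S5 : jointEntropy p (fun ω => (A₁ ω, (A₀ ω, B ω, C₁ ω), C₀ ω))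
      + jointEntropy p (fun ω => (A₀ ω, B ω, C₁ ω))
      ≤ jointEntropy p (fun ω => (A₁ ω, A₀ ω, B ω, C₁ ω))
      + jointEntropy p (fun ω => ((A₀ ω, B ω, C₁ ω), C₀ ω)) :=
    jointEntropy_submod p hp0 hp1 A₁ (fun ω => (A₀ ω, B ω, C₁ ω)) C₀
  have S6 : jointEntropy p (fun ω => (B ω, C₀ ω, C₁ ω)) + jointEntropy p C₀
      ≤ jointEntropy p (fun ω => (B ω, C₀ ω))
      + jointEntropy p (fun ω => (C₀ ω, C₁ ω)) :=
    jointEntropy_submod p hp0 hp1 B C₀ C₁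
  -- relabeling equalities
  have R1 : jointEntropy p (fun ω => ((A₁ ω, B ω), C₁ ω))
      = jointEntropy p (fun ω => (A₁ ω, B ω, C₁ ω)) :=
    jointEntropy_comp p (fun ω => (A₁ ω, B ω, C₁ ω))
      (fun x => ((x.1, x.2.1), x.2.2))
      (fun x y h => by simp only [Prod.ext_iff] at h ⊢; tauto)
  have R2 : jointEntropy p (fun ω => (A₁ ω, A₀ ω, B ω))
      = jointEntropy p (fun ω => (A₀ ω, A₁ ω, B ω)) :=
    jointEntropy_comp p (fun ω => (A₀ ω, A₁ ω, B ω))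
      (fun x => (x.2.1, x.1, x.2.2))
      (fun x y h => by simp only [Prod.ext_iff] at h ⊢; tauto)
  have R3 : jointEntropy p (fun ω => (A₁ ω, A₀ ω))
      = jointEntropy p (fun ω => (A₀ ω, A₁ ω)) :=
    jointEntropy_comp p (fun ω => (A₀ ω, A₁ ω)) (fun x => (x.2, x.1))
      (fun x y h => by simp only [Prod.ext_iff] at h ⊢; tauto)
  have R4 : jointEntropy p (fun ω => (A₁ ω, A₀ ω, B ω, C₁ ω))
      = jointEntropy p (fun ω => (A₀ ω, (A₁ ω, B ω), C₁ ω)) :=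
    jointEntropy_comp p (fun ω => (A₀ ω, (A₁ ω, B ω), C₁ ω))
      (fun x => (x.2.1.1, x.1, x.2.1.2, x.2.2))
      (fun x y h => by simp only [Prod.ext_iff] at h ⊢; tauto)
  have R5 : jointEntropy p (fun ω => ((A₀ ω, B ω, C₁ ω), C₀ ω))
      = jointEntropy p (fun ω => (A₀ ω, (B ω, C₀ ω), C₁ ω)) :=
    jointEntropy_comp p (fun ω => (A₀ ω, (B ω, C₀ ω), C₁ ω))
      (fun x => ((x.1, x.2.1.1, x.2.2), x.2.1.2))
      (fun x y h => by simp only [Prod.ext_iff] at h ⊢; tauto)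
  have R6 : jointEntropy p (fun ω => (A₁ ω, (A₀ ω, B ω, C₁ ω), C₀ ω)) = H5 := by
    rw [hH5]
    exact jointEntropy_comp p (fun ω => ((A₀ ω, A₁ ω, C₀ ω, C₁ ω), B ω))
      (fun x => (x.1.2.1, (x.1.1, x.2, x.1.2.2.2), x.1.2.2.1))
      (fun x y h => by simp only [Prod.ext_iff] at h ⊢; tauto)
  have R7 : jointEntropy p (fun ω => (B ω, C₀ ω, C₁ ω))
      = jointEntropy p (fun ω => ((B ω, C₀ ω), C₁ ω)) := by
    exact (jointEntropy_comp p (fun ω => (B ω, C₀ ω, C₁ ω))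
      (fun x => ((x.1, x.2.1), x.2.2))
      (fun x y h => by simp only [Prod.ext_iff] at h ⊢; tauto)).symm
  linarith [M1, S2, S3, S4, S5, S6, R1, R2, R3, R4, R5, R6, R7, hind]
end
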